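/- arXiv:math/0307031 — 13 statements merged into one kernel-verified Lean document; each statement's English description precedes it below -/
import Mathlib

section
/- For every polynomial f ∈ k[X] with f(0) = 0, the set S(f) contains 0 and is closed under addition; since k has characteristic p, S(f) is therefore an 𝔽_p-subspace of the additive group of k. (This is the content of the Proposition asserting that Ad_f(Y) is an additive polynomial.) -/
open Polynomial

/-- `S(f)`: the set of `y ∈ k` such that `f(X+y) - f(X) - f(y) = P(X) - P(X)^p`
for some polynomial `P` with `P(0) = 0`. -/
def Sf (p : ℕ) {k : Type*} [Field k] (f : k[X]) : Set k :=
  {y | ∃ P : k[X], P.coeff 0 = 0 ∧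
    f.comp (X + C y) - f - C (f.eval y) = P - P ^ p}

theorem Sf.mem_of_eq (p : ℕ) (hp : p.Prime) {k : Type*} [Field k] [CharP k p]
    {f : k[X]} (hf0 : f.coeff 0 = 0) (y : k) (P : k[X])
    (h : f.comp (X + C y) - f - C (f.eval y) = P - P ^ p) : y ∈ Sf p f := by
  haveI : Fact p.Prime := ⟨hp⟩
  set r := P.coeff 0 with hr
  have hrr : r - r ^ p = 0 := by
    have h0 := congrArg (fun q : k[X] => q.eval 0) h
    simp only [eval_sub, eval_comp, eval_add, eval_X, eval_C, eval_pow, zero_add,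
      ← coeff_zero_eq_eval_zero, hf0] at h0
    linear_combination -h0
  refine ⟨P - C r, ?_, ?_⟩
  · simp [← hr]
  · rw [sub_pow_char, h]
    have hc : (C r : k[X]) - C r ^ p = 0 := by rw [← C_pow, ← C_sub, hrr, map_zero]
    linear_combination hc

theorem Sf.zero_mem (p : ℕ) (hp : p.Prime) {k : Type*} [Field k] [CharP k p]
    {f : k[X]} (hf0 : f.coeff 0 = 0) : (0 : k) ∈ Sf p f := by
  refine ⟨0, rfl, ?_⟩
  rw [map_zero, add_zero, comp_X, ← coeff_zero_eq_eval_zero, hf0, map_zero,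
    zero_pow hp.ne_zero]
  ring

theorem Sf.add_mem (p : ℕ) (hp : p.Prime) {k : Type*} [Field k] [CharP k p]
    {f : k[X]} (hf0 : f.coeff 0 = 0) (y z : k)
    (hy : y ∈ Sf p f) (hz : z ∈ Sf p f) : y + z ∈ Sf p f := by
  haveI : Fact p.Prime := ⟨hp⟩
  obtain ⟨P, -, hP⟩ := hy
  obtain ⟨Q, -, hQ⟩ := hz
  set A : k[X] := P.comp (X + C z) with hA
  set c : k := Q.eval y with hc
  -- compose hP with X + C z
  have h1 : f.comp (X + C (y + z)) - f.comp (X + C z) - C (f.eval y) = A - A ^ p := by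
    have h1' := congrArg (fun q : k[X] => q.comp (X + C z)) hP
    simp only [sub_comp, add_comp, X_comp, C_comp, pow_comp, comp_assoc] at h1'
    rw [show (X + C z + C y : k[X]) = X + C (y + z) by rw [C_add]; ring] at h1'
    exact h1'
  -- evaluate hQ at y
  have h3 : C (f.eval (y + z)) - C (f.eval y) - C (f.eval z) = C c - C c ^ p := by
    have h3' := congrArg (fun a : k => (C a : k[X])) (congrArg (eval y) hQ)
    simp only [eval_sub, eval_comp, eval_add, eval_X, eval_C, eval_pow, map_sub, map_pow,
      ] at h3'
    exact h3'
  refine Sf.mem_of_eq p hp hf0 (y + z) (A + Q - C c) ?_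
  have hRp : (A + Q - C c) ^ p = A ^ p + Q ^ p - C c ^ p := by
    rw [sub_pow_char, add_pow_char]
  rw [hRp]
  linear_combination h1 + hQ - h3

/-- For every polynomial `f ∈ k[X]` with `f(0) = 0`, the set `S(f)` contains `0` and
is closed under addition; hence (in characteristic `p`) it is an additive subgroup
(an `𝔽_p`-subspace) of `k`. -/
theorem Sf_zero_mem_and_add_closed (p : ℕ) (hp : p.Prime)
    (k : Type*) [Field k] [IsAlgClosed k] [CharP k p]
    (f : k[X]) (hf0 : f.coeff 0 = 0) :
    (0 : k) ∈ Sf p f ∧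
    (∀ y z : k, y ∈ Sf p f → z ∈ Sf p f → y + z ∈ Sf p f) ∧
    ∃ V : AddSubgroup k, (V : Set k) = Sf p f := by
  have hsmul : ∀ (n : ℕ) (y : k), y ∈ Sf p f → (n • y : k) ∈ Sf p f := by
    intro n y hy
    induction n with
    | zero => simpa using Sf.zero_mem p hp hf0
    | succ m ih =>
      rw [succ_nsmul]
      exact Sf.add_mem p hp hf0 _ _ ih hy
  have hneg : ∀ y : k, y ∈ Sf p f → -y ∈ Sf p f := by
    intro y hy
    have h1 : ((p - 1) • y : k) ∈ Sf p f := hsmul (p - 1) y hy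
    have h2 : ((p - 1) • y : k) = -y := by
      rw [nsmul_eq_mul, Nat.cast_sub hp.one_le, CharP.cast_eq_zero, Nat.cast_one]
      ring
    rwa [h2] at h1
  refine ⟨Sf.zero_mem p hp hf0, fun y z => Sf.add_mem p hp hf0 y z, ?_⟩
  exact ⟨{ carrier := Sf p f
           zero_mem' := Sf.zero_mem p hp hf0
           add_mem' := fun ha hb => Sf.add_mem p hp hf0 _ _ ha hb
           neg_mem' := fun ha => hneg _ ha }, rfl⟩
end

section
/- (Theorem 1 a), after Stichtenoth, Satz 4.) Let f ∈ k[X] with f(0) = 0, m := deg f, p ∤ m, m ≥ 2, and (m−1)(p−1) > 2 (i.e. the curve W^p − W = f(X) has genus g(f) = (m−1)(p−1)/2 > 1). Then S(f) is finite and |S(f)| ≤ (m−1)^2; equivalently, |G_{∞,1}(f)| ≤ p(m−1)^2. -/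
/-! Write `f(X+y) - f(X) - f(y) = P - P^p` coefficientwise. In characteristic `p` the `j`-th
coefficient of `P - P^p` is `P_j - P_{j/p}^p` (the last term only when `p ∣ j`), so for `j ≠ 0`
the coefficient `P_j` is a polynomial `F_j(y)` in `y`, obtained by iterating that relation;
`F_j` has degree at most `j (m-1)` and its linear coefficient is `(j+1) f_{j+1}`.
As `deg (P - P^p) = p deg P ≤ m - 1`, we get `P_{m-1} = 0`, so every `y ∈ S(f)` is a root of
`F_{m-1}`, which is nonzero of degree at most `(m-1)^2` because `p ∤ m`. -/

open Polynomial

namespace Polynomial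

theorem coeff_pow_expChar {R : Type*} [CommSemiring R] (p : ℕ) [ExpChar R p] (q : R[X]) (n : ℕ) :
    (q ^ p).coeff n = if p ∣ n then q.coeff (n / p) ^ p else 0 := by
  rw [← map_frobenius_expand p q, coeff_map, coeff_expand (expChar_pos R p),
    apply_ite (frobenius R p), frobenius_def, frobenius_def, zero_pow (expChar_pos R p).ne']

end Polynomial

section ArtinSchreierCoeff

variable {R : Type*} [CommSemiring R] {p : ℕ}

noncomputable def artinSchreierCoeff (p : ℕ) (g : ℕ → R) : ℕ → R
  | j => g j + if h : 1 < p ∧ p ∣ j ∧ j ≠ 0 then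
      have : j / p < j := Nat.div_lt_self (Nat.pos_of_ne_zero h.2.2) h.1
      artinSchreierCoeff p g (j / p) ^ p
    else 0

theorem artinSchreierCoeff_eq (g : ℕ → R) (j : ℕ) :
    artinSchreierCoeff p g j =
      g j + if 1 < p ∧ p ∣ j ∧ j ≠ 0 then artinSchreierCoeff p g (j / p) ^ p else 0 := by
  rw [artinSchreierCoeff]
  split_ifs <;> rfl

theorem map_artinSchreierCoeff {S : Type*} [CommSemiring S] (φ : R →+* S) (g : ℕ → R) (j : ℕ) :
    φ (artinSchreierCoeff p g j) = artinSchreierCoeff p (φ ∘ g) j := by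
  induction j using Nat.strong_induction_on with
  | _ j ih =>
    rw [artinSchreierCoeff_eq g, artinSchreierCoeff_eq (φ ∘ g), map_add, apply_ite φ, map_pow,
      map_zero]
    split_ifs with h
    · rw [ih _ (Nat.div_lt_self (Nat.pos_of_ne_zero h.2.2) h.1)]
      rfl
    · rfl

theorem natDegree_artinSchreierCoeff_le {g : ℕ → R[X]} {d : ℕ}
    (hg : ∀ j ≠ 0, (g j).natDegree ≤ j * d) {j : ℕ} (hj : j ≠ 0) :
    (artinSchreierCoeff p g j).natDegree ≤ j * d := by
  induction j using Nat.strong_induction_on with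
  | _ j ih =>
    rw [artinSchreierCoeff_eq]
    refine (natDegree_add_le _ _).trans (max_le (hg j hj) ?_)
    split_ifs with h
    · obtain ⟨hp, hpj, -⟩ := h
      have hjp : j / p ≠ 0 := (Nat.div_ne_zero_iff_of_dvd hpj).mpr ⟨hj, by omega⟩
      calc (artinSchreierCoeff p g (j / p) ^ p).natDegree
          ≤ p * ((j / p) * d) :=
            natDegree_pow_le.trans
              (Nat.mul_le_mul_left _ (ih _ (Nat.div_lt_self (by omega) hp) hjp))
        _ = j * d := by rw [← mul_assoc, Nat.mul_div_cancel' hpj]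
    · simp

theorem coeff_one_artinSchreierCoeff (hp : p.Prime) [CharP R p] (g : ℕ → R[X]) (j : ℕ) :
    (artinSchreierCoeff p g j).coeff 1 = (g j).coeff 1 := by
  have := ExpChar.prime (R := R) hp
  rw [artinSchreierCoeff_eq, coeff_add]
  split_ifs
  · rw [coeff_pow_expChar, if_neg hp.not_dvd_one, add_zero]
  · rw [coeff_zero, add_zero]

theorem coeff_eq_artinSchreierCoeff {R : Type*} [CommRing R] (hp : p.Prime) [CharP R p]
    {P Q : R[X]} (hPQ : P - P ^ p = Q) {g : ℕ → R} (hg : ∀ j ≠ 0, Q.coeff j = g j)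
    {j : ℕ} (hj : j ≠ 0) : P.coeff j = artinSchreierCoeff p g j := by
  have := ExpChar.prime (R := R) hp
  induction j using Nat.strong_induction_on with
  | _ j ih =>
    rw [artinSchreierCoeff_eq, ← hg j hj, ← hPQ, coeff_sub, coeff_pow_expChar]
    by_cases hpj : p ∣ j
    · have hjp : j / p ≠ 0 := (Nat.div_ne_zero_iff_of_dvd hpj).mpr ⟨hj, hp.ne_zero⟩
      rw [if_pos hpj, if_pos ⟨hp.one_lt, hpj, hj⟩,
        ← ih _ (Nat.div_lt_self (by omega) hp.one_lt) hjp]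
      ring
    · rw [if_neg hpj, if_neg (fun h ↦ hpj h.2.1), sub_zero, add_zero]

end ArtinSchreierCoeff

section WitnessCoeff

variable {R : Type*} [CommRing R]

theorem coeff_comp_X_add_C_sub_sub (f : R[X]) (y : R) {j : ℕ} (hj : j ≠ 0) :
    (f.comp (X + C y) - f - C (f.eval y)).coeff j = (hasseDeriv j f - C (f.coeff j)).eval y := by
  rw [coeff_sub, coeff_sub, coeff_C_of_ne_zero hj, sub_zero, ← taylor_apply, taylor_coeff,
    eval_sub, eval_C]

theorem natDegree_comp_X_add_C_sub_sub_le (f : R[X]) (y : R) :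
    (f.comp (X + C y) - f - C (f.eval y)).natDegree ≤ f.natDegree - 1 := by
  refine natDegree_le_iff_coeff_eq_zero.mpr fun j hj ↦ ?_
  rw [coeff_comp_X_add_C_sub_sub f y (by omega),
    eq_C_of_natDegree_le_zero ((natDegree_hasseDeriv_le f j).trans (by omega))]
  simp [hasseDeriv_coeff]

theorem natDegree_lt_of_natDegree_sub_pow_le [NoZeroDivisors R] {P : R[X]} {n d : ℕ} (hn : 1 < n)
    (hd : 0 < d) (h : (P - P ^ n).natDegree ≤ d) : P.natDegree < d := by
  rcases Nat.eq_zero_or_pos P.natDegree with h0 | h0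
  · omega
  have hlt : P.natDegree < (P ^ n).natDegree := by rw [natDegree_pow]; nlinarith
  rw [natDegree_sub_eq_right_of_natDegree_lt hlt, natDegree_pow] at h
  nlinarith

/-- The polynomial `F_j`: if `P` witnesses `y ∈ S(f)` and `j ≠ 0`, then
`P.coeff j = (witnessCoeff p f j).eval y`. -/
noncomputable def witnessCoeff (p : ℕ) (f : R[X]) (j : ℕ) : R[X] :=
  artinSchreierCoeff p (fun i ↦ hasseDeriv i f - C (f.coeff i)) j

theorem natDegree_witnessCoeff_le (p : ℕ) (f : R[X]) {j : ℕ} (hj : j ≠ 0) :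
    (witnessCoeff p f j).natDegree ≤ j * (f.natDegree - 1) := by
  refine natDegree_artinSchreierCoeff_le (fun i hi ↦ ?_) hj
  refine (natDegree_sub_le _ _).trans (max_le ?_ (by simp))
  calc (hasseDeriv i f).natDegree ≤ f.natDegree - i := natDegree_hasseDeriv_le f i
    _ ≤ f.natDegree - 1 := by omega
    _ ≤ i * (f.natDegree - 1) := Nat.le_mul_of_pos_left _ (Nat.pos_of_ne_zero hi)

theorem coeff_one_witnessCoeff {p : ℕ} (hp : p.Prime) [CharP R p] (f : R[X]) (j : ℕ) :
    (witnessCoeff p f j).coeff 1 = ((j + 1 : ℕ) : R) * f.coeff (j + 1) := by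
  rw [witnessCoeff, coeff_one_artinSchreierCoeff hp, coeff_sub, coeff_C_of_ne_zero one_ne_zero,
    sub_zero, hasseDeriv_coeff, add_comm 1 j, Nat.choose_succ_self_right]

end WitnessCoeff

theorem witnessCoeff_eval_eq_zero {k : Type*} [Field k] {p : ℕ} (hp : p.Prime) [CharP k p]
    {f : k[X]} (hf : 2 ≤ f.natDegree) {y : k} (hy : y ∈ Sf p f) :
    (witnessCoeff p f (f.natDegree - 1)).eval y = 0 := by
  obtain ⟨P, -, hP⟩ := hy
  have hPdeg : P.natDegree < f.natDegree - 1 :=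
    natDegree_lt_of_natDegree_sub_pow_le hp.one_lt (by omega)
      (hP ▸ natDegree_comp_X_add_C_sub_sub_le f y)
  rw [witnessCoeff, ← coe_evalRingHom, map_artinSchreierCoeff,
    ← coeff_eq_zero_of_natDegree_lt hPdeg]
  exact (coeff_eq_artinSchreierCoeff hp hP.symm (fun j hj ↦ coeff_comp_X_add_C_sub_sub f y hj)
    (by omega)).symm

theorem card_Sf_le_sq_general (p : ℕ) (hp : p.Prime) (k : Type*) [Field k] [CharP k p]
    (f : k[X]) (m : ℕ) (hm : f.natDegree = m)
    (hpm : ¬ p ∣ m) (hm2 : 2 ≤ m) :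
    (Sf p f).Finite ∧ (Sf p f).ncard ≤ (m - 1) ^ 2 := by
  subst hm
  set F := witnessCoeff p f (f.natDegree - 1)
  have hF : F ≠ 0 := by
    intro hF0
    have h1 : F.coeff 1 = _ := coeff_one_witnessCoeff hp f (f.natDegree - 1)
    rw [Nat.sub_add_cancel (by omega), ← leadingCoeff, hF0, coeff_zero] at h1
    have hf : f ≠ 0 := fun h ↦ by simp [h] at hm2
    exact mul_ne_zero (mt (CharP.cast_eq_zero_iff k p _).mp hpm) (leadingCoeff_ne_zero.mpr hf)
      h1.symm
  have hsub : Sf p f ⊆ F.rootSet k := fun y hy ↦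
    (mem_rootSet_of_ne hF).mpr (by simpa using witnessCoeff_eval_eq_zero hp hm2 hy)
  refine ⟨(F.rootSet_finite k).subset hsub, ?_⟩
  calc (Sf p f).ncard ≤ (F.rootSet k).ncard := Set.ncard_le_ncard hsub (F.rootSet_finite k)
    _ ≤ F.natDegree := ncard_rootSet_le F k
    _ ≤ (f.natDegree - 1) ^ 2 := sq (f.natDegree - 1) ▸ natDegree_witnessCoeff_le p f (by omega)

/-- Theorem 1 a) (Stichtenoth, Satz 4): if `deg f = m` is prime to `p`, `m ≥ 2` and the
genus `(m-1)(p-1)/2 > 1`, then `S(f)` is finite of cardinality at most `(m-1)^2`,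
i.e. `|G_{∞,1}(f)| ≤ p (m-1)^2`. -/
theorem card_Sf_le_sq (p : ℕ) (hp : p.Prime) (k : Type*) [Field k] [IsAlgClosed k] [CharP k p]
    (f : k[X]) (hf0 : f.coeff 0 = 0) (m : ℕ) (hm : f.natDegree = m)
    (hpm : ¬ p ∣ m) (hm2 : 2 ≤ m) (hg : 2 < (m - 1) * (p - 1)) :
    (Sf p f).Finite ∧ (Sf p f).ncard ≤ (m - 1) ^ 2 :=
  card_Sf_le_sq_general p hp k f m hm hpm hm2
end

section
/- (Theorem 1 b), after Stichtenoth, Satz 4.) Let f ∈ k[X] with f(0) = 0, m := deg f, p ∤ m, m ≥ 2, (m−1)(p−1) > 2, and assume additionally that p does not divide m−1. Then S(f) = {0}; equivalently, |G_{∞,1}(f)| = p. -/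
open Polynomial

/-- Theorem 1 b) (Stichtenoth, Satz 4): if moreover `p ∤ m - 1`, then `S(f) = {0}`,
i.e. `|G_{∞,1}(f)| = p`. -/
theorem Sf_eq_singleton_zero (p : ℕ) (hp : p.Prime)
    (k : Type*) [Field k] [IsAlgClosed k] [CharP k p]
    (f : k[X]) (hf0 : f.coeff 0 = 0) (m : ℕ) (hm : f.natDegree = m)
    (hpm : ¬ p ∣ m) (hm2 : 2 ≤ m) (hg : 2 < (m - 1) * (p - 1))
    (hpm1 : ¬ p ∣ (m - 1)) :
    Sf p f = {0} := by
  ext y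
  simp only [Sf, Set.mem_setOf_eq, Set.mem_singleton_iff]
  constructor
  · rintro ⟨P, hP0, hPeq⟩
    by_contra hy
    have hf_ne : f ≠ 0 := by
      intro h
      rw [h, natDegree_zero] at hm
      omega
    have hfm : f.coeff m ≠ 0 := by
      rw [← hm]
      exact mt leadingCoeff_eq_zero.mp hf_ne
    set g := f.comp (X + C y) - f - C (f.eval y) with hg_def
    -- coefficients of g in terms of hasse derivatives
    have hcoeff : ∀ n, g.coeff n =
        (hasseDeriv n f).eval y - f.coeff n - (if n = 0 then f.eval y else 0) := by
      intro n
      rw [hg_def, coeff_sub, coeff_sub, coeff_C, ← taylor_apply, taylor_coeff]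
    -- For n ≥ m, the hasse derivative is constant
    have hC : ∀ n, m ≤ n → hasseDeriv n f = C (f.coeff n) := by
      intro n hn
      ext j
      rw [hasseDeriv_coeff, coeff_C]
      rcases Nat.eq_zero_or_pos j with hj | hj
      · subst hj
        simp
      · have : f.coeff (j + n) = 0 := by
          apply coeff_eq_zero_of_natDegree_lt
          omega
        rw [this, mul_zero, if_neg (by omega : ¬ j = 0)]
    -- coefficient at m - 1
    have h1 : g.coeff (m - 1) = (m : k) * f.coeff m * y := by
      rw [hcoeff, if_neg (by omega : ¬ m - 1 = 0)]
      have hq : (hasseDeriv (m - 1) f).natDegree < 2 := by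
        have : (hasseDeriv (m - 1) f).natDegree ≤ 1 := by
          apply natDegree_le_iff_coeff_eq_zero.mpr
          intro n hn
          rw [hasseDeriv_coeff]
          have : f.coeff (n + (m - 1)) = 0 := by
            apply coeff_eq_zero_of_natDegree_lt
            omega
          rw [this, mul_zero]
        omega
      rw [eval_eq_sum_range' hq]
      have e0 : (hasseDeriv (m - 1) f).coeff 0 = f.coeff (m - 1) := by
        rw [hasseDeriv_coeff]
        simp
      have e1 : (hasseDeriv (m - 1) f).coeff 1 = (m : k) * f.coeff m := by
        rw [hasseDeriv_coeff]
        have h1m : 1 + (m - 1) = m := by omega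
        rw [h1m]
        have : m.choose (m - 1) = m := by
          have := Nat.choose_symm (n := m) (k := 1) (by omega)
          rw [Nat.choose_one_right] at this
          omega
        rw [this]
      rw [Finset.sum_range_succ, Finset.sum_range_one, e0, e1]
      ring
    have h1ne : g.coeff (m - 1) ≠ 0 := by
      rw [h1]
      have hmk : (m : k) ≠ 0 := by
        rw [Ne, CharP.cast_eq_zero_iff k p m]
        exact hpm
      exact mul_ne_zero (mul_ne_zero hmk hfm) hy
    -- degree bound
    have hdeg : g.natDegree ≤ m - 1 := by
      apply natDegree_le_iff_coeff_eq_zero.mpr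
      intro n hn
      rw [hcoeff, if_neg (by omega : ¬ n = 0), hC n (by omega), eval_C, sub_self, sub_zero]
    have hdegeq : g.natDegree = m - 1 :=
      le_antisymm hdeg (le_natDegree_of_ne_zero h1ne)
    -- now use the equation
    have hPne : P ≠ 0 := by
      intro h
      rw [h] at hPeq
      rw [zero_pow hp.ne_zero, sub_zero] at hPeq
      rw [hPeq] at h1ne
      simp at h1ne
    have hPd : P.natDegree ≠ 0 := by
      intro h
      have := eq_C_of_natDegree_eq_zero h
      rw [hP0, map_zero] at this
      exact hPne this
    have hlt : P.natDegree < (P ^ p).natDegree := by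
      rw [natDegree_pow]
      have h2 : 2 ≤ p := hp.two_le
      have h1' : 1 ≤ P.natDegree := Nat.pos_of_ne_zero hPd
      nlinarith
    have hsub : (P - P ^ p).natDegree = p * P.natDegree := by
      rw [natDegree_sub_eq_right_of_natDegree_lt hlt, natDegree_pow]
    rw [hPeq, hsub] at hdegeq
    exact hpm1 ⟨P.natDegree, hdegeq.symm⟩
  · rintro rfl
    refine ⟨0, by simp, ?_⟩
    rw [zero_pow hp.ne_zero, sub_zero, ← coeff_zero_eq_eval_zero, hf0]
    simp
end

section
/- (Theorem 1 c), first half; after Stichtenoth, Satz 5.) Let f(X) = X^m with p ∤ m, m ≥ 2, (m−1)(p−1) > 2, and assume m−1 is NOT a power of p. Then S(f) = {0}; equivalently, |G_{∞,1}(X^m)| = p. -/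
/-!
If `y ≠ 0` lies in `S(X^m)`, the left side `(X + y)^m - X^m - y^m` has degree exactly `m - 1`
(its top coefficient is `m y`), while `P - P^p` has degree `p · deg P`; hence `m - 1 = p d`.
As `d` is not a power of `p`, write `d = p^t u` with `p ∤ u` and `u ≥ 2`. At the index
`j = p (d - p^t) + 1`, which exceeds `d` and is prime to `p`, the coefficient of `P - P^p`
vanishes, whereas that of the left side is `y^(m-j) · C(p d + 1, j)`, and by Lucas
`C(p d + 1, j) ≡ C(d, p^t) ≡ u ≢ 0 (mod p)`.
-/

open Polynomial

theorem Choose.choose_mul_add_one_modEq {p : ℕ} [Fact p.Prime] (a b : ℕ) :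
    (p * a + 1).choose (p * b + 1) ≡ a.choose b [MOD p] := by
  have hp : 1 < p := (Fact.out : p.Prime).one_lt
  have := Choose.choose_modEq_choose_mod_mul_choose_div_nat (n := p * a + 1)
    (k := p * b + 1) (p := p)
  simpa [Nat.mul_add_mod, Nat.mod_eq_of_lt hp, Nat.mul_add_div (by omega : 0 < p),
    Nat.div_eq_of_lt hp] using this

theorem Nat.Prime.exists_not_dvd_choose_mul_add_one {p d : ℕ} (hp : p.Prime) (hd0 : d ≠ 0)
    (hd : ∀ s, d ≠ p ^ s) :
    ∃ e < d, d < p * e + 1 ∧ ¬ p ∣ (p * d + 1).choose (p * e + 1) := by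
  have := Fact.mk hp
  obtain ⟨t, u, hpu, rfl⟩ := Nat.exists_eq_pow_mul_and_not_dvd hd0 p hp.ne_one
  have hu : 2 ≤ u := by
    rcases u with _ | _ | u
    · exact absurd (dvd_zero p) hpu
    · exact absurd (mul_one _) (hd t)
    · omega
  have hpt : 0 < p ^ t := pow_pos hp.pos t
  have hp2 := hp.two_le
  refine ⟨p ^ t * (u - 1), ?_, ?_, fun hdvd => hpu ?_⟩
  · exact (Nat.mul_lt_mul_left hpt).mpr (by omega)
  · have : u ≤ p * (u - 1) := by
      calc u ≤ 2 * (u - 1) := by omega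
        _ ≤ p * (u - 1) := Nat.mul_le_mul_right _ hp2
    calc p ^ t * u ≤ p ^ t * (p * (u - 1)) := Nat.mul_le_mul_left _ this
      _ < p * (p ^ t * (u - 1)) + 1 := by rw [mul_left_comm]; omega
  · have hsymm : (p ^ t * u).choose (p ^ t * (u - 1)) = (p ^ t * u).choose (p ^ t * 1) := by
      rw [← Nat.choose_symm (Nat.mul_le_mul_left _ (Nat.sub_le u 1)), ← Nat.mul_sub]
      congr 2
      omega
    have hlucas : (p * (p ^ t * u) + 1).choose (p * (p ^ t * (u - 1)) + 1) ≡ u [MOD p] := by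
      calc _ ≡ (p ^ t * u).choose (p ^ t * (u - 1)) [MOD p] := Choose.choose_mul_add_one_modEq _ _
        _ = (p ^ t * u).choose (p ^ t * 1) := hsymm
        _ ≡ u.choose 1 [MOD p] := Choose.choose_pow_mul_pow_mul_modEq_choose_nat
        _ = u := Nat.choose_one_right u
    exact (Nat.modEq_zero_iff_dvd).mp (hlucas.symm.trans ((Nat.modEq_zero_iff_dvd).mpr hdvd))

theorem Polynomial.natDegree_sub_pow_self {R : Type*} [CommRing R] [NoZeroDivisors R] {p : ℕ}
    (hp : 1 < p) (P : R[X]) : (P - P ^ p).natDegree = p * P.natDegree := by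
  rcases Nat.eq_zero_or_pos P.natDegree with h | h
  · rw [h, mul_zero, eq_C_of_natDegree_eq_zero h, ← C_pow, ← C_sub, natDegree_C]
  · have hlt : P.natDegree < (P ^ p).natDegree := by rw [natDegree_pow]; exact lt_mul_left h hp
    rw [natDegree_sub_eq_right_of_natDegree_lt hlt, natDegree_pow]

theorem Polynomial.coeff_sub_pow_char_eq_zero {R : Type*} [CommRing R] {p : ℕ} [Fact p.Prime]
    [CharP R p] (P : R[X]) {j : ℕ} (hPj : P.natDegree < j) (hpj : ¬ p ∣ j) :
    (P - P ^ p).coeff j = 0 := by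
  rw [coeff_sub, coeff_eq_zero_of_natDegree_lt hPj, ← map_frobenius_expand p P, coeff_map,
    coeff_expand (Fact.out : p.Prime).pos, if_neg hpj, map_zero, sub_zero]

theorem Polynomial.coeff_X_add_C_pow_sub_X_pow_sub_C {R : Type*} [CommRing R] (y : R) {m j : ℕ}
    (hj0 : j ≠ 0) (hjm : j ≠ m) :
    ((X + C y) ^ m - X ^ m - C (y ^ m)).coeff j = y ^ (m - j) * m.choose j := by
  rw [coeff_sub, coeff_sub, coeff_X_add_C_pow, coeff_X_pow, coeff_C, if_neg hjm, if_neg hj0,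
    sub_zero, sub_zero]

theorem Polynomial.natDegree_X_add_C_pow_sub_X_pow_sub_C {R : Type*} [CommRing R] {y : R} {m : ℕ}
    (hm : 2 ≤ m) (hy : y * m ≠ 0) :
    ((X + C y) ^ m - X ^ m - C (y ^ m)).natDegree = m - 1 := by
  have hcoeff_pred : ((X + C y) ^ m - X ^ m - C (y ^ m)).coeff (m - 1) = y * m := by
    rw [coeff_X_add_C_pow_sub_X_pow_sub_C y (by omega) (by omega), Nat.sub_sub_self (by omega),
      pow_one, Nat.choose_symm (by omega), Nat.choose_one_right]
  refine natDegree_eq_of_le_of_coeff_ne_zero ((natDegree_le_iff_coeff_eq_zero).mpr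
    fun j hj => ?_) (hcoeff_pred ▸ hy)
  rcases eq_or_ne j m with rfl | hjm
  · rw [coeff_sub, coeff_sub, coeff_X_add_C_pow, coeff_X_pow_self, coeff_C, if_neg (by omega)]
    simp
  · rw [coeff_X_add_C_pow_sub_X_pow_sub_C y (by omega) hjm,
      Nat.choose_eq_zero_of_lt (by omega), Nat.cast_zero, mul_zero]

theorem Sf_monomial_eq_singleton_zero_general (p : ℕ) (hp : p.Prime)
    (k : Type*) [Field k] [CharP k p]
    (m : ℕ) (hpm : ¬ p ∣ m) (hm2 : 2 ≤ m)
    (hpow : ¬ ∃ s : ℕ, m - 1 = p ^ s) :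
    Sf p ((X : k[X]) ^ m) = {0} := by
  have := Fact.mk hp
  refine Set.eq_singleton_iff_unique_mem.mpr ⟨⟨0, coeff_zero 0, ?_⟩, ?_⟩
  · simp [zero_pow (by omega : m ≠ 0), zero_pow hp.ne_zero]
  rintro y ⟨P, -, hP⟩
  by_contra hy
  have heq : (X + C y) ^ m - X ^ m - C (y ^ m) = P - P ^ p := by simpa [pow_comp] using hP
  have hdeg : p * P.natDegree = m - 1 := by
    rw [← natDegree_sub_pow_self hp.one_lt, ← heq, natDegree_X_add_C_pow_sub_X_pow_sub_C hm2
      (mul_ne_zero hy ((CharP.cast_eq_zero_iff k p m).not.mpr hpm))]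
  obtain ⟨e, hed, hde, hchoose⟩ := hp.exists_not_dvd_choose_mul_add_one (d := P.natDegree)
    (fun h => by rw [h, mul_zero] at hdeg; omega)
    fun s hs => hpow ⟨s + 1, by rw [← hdeg, hs, pow_succ']⟩
  obtain rfl : m = p * P.natDegree + 1 := by omega
  have hcoeff := congrArg (coeff · (p * e + 1)) heq
  rw [coeff_X_add_C_pow_sub_X_pow_sub_C y (by omega) (by nlinarith),
    coeff_sub_pow_char_eq_zero P hde (by simp [Nat.dvd_add_right, hp.one_lt.ne']),
    mul_eq_zero, or_iff_right (pow_ne_zero _ hy), CharP.cast_eq_zero_iff k p] at hcoeff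
  exact hchoose hcoeff

/-- Theorem 1 c), first half (Stichtenoth, Satz 5): for `f = X^m` with `p ∤ m`, genus `> 1`,
and `m - 1` not a power of `p`, one has `S(f) = {0}`, i.e. `|G_{∞,1}(X^m)| = p`. -/
theorem Sf_monomial_eq_singleton_zero (p : ℕ) (hp : p.Prime)
    (k : Type*) [Field k] [IsAlgClosed k] [CharP k p]
    (m : ℕ) (hpm : ¬ p ∣ m) (hm2 : 2 ≤ m) (hg : 2 < (m - 1) * (p - 1))
    (hpow : ¬ ∃ s : ℕ, m - 1 = p ^ s) :
    Sf p ((X : k[X]) ^ m) = {0} :=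
  Sf_monomial_eq_singleton_zero_general p hp k m hpm hm2 hpow
end

section
/- (Theorem 1 c), second half.) Let n ≥ 1 and f(X) = X^{1+p^n}. Then S(f) = {y ∈ k : y^{p^{2n}} + y = 0}, a set of exactly p^{2n} elements; equivalently, |G_{∞,1}(X^{1+p^n})| = p^{2n+1}. -/
/-!
Over a field of characteristic `p`, with `q = p ^ n`, one has
`f(X + y) - f(X) - f(y) = y X^q + y^q X`, and for any `c` the polynomial
`T_c = ∑_{j<n} (c X)^{p^j}` satisfies `T_c - T_c^p = c X - c^q X^q` (a telescoping sum).
Writing `y = d^q`, a solution `P` for `y` makes `P + T_d` an Artin–Schreier preimage of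
the linear polynomial `(y^q + d) X`; since `A - A^p` has degree `p · deg A ≥ p` whenever
`A ≠ 0` and `A(0) = 0`, this forces `y^q = -d`, i.e. `y^{q^2} = -y`. Conversely, if
`y^{q^2} = -y` then `P = T_{y^q}` works. Finally `Y^{q^2} + Y` has derivative `1`, so it
has exactly `q^2` roots.
-/

open Polynomial

section CharP

variable {R : Type*} [CommRing R] {p : ℕ} [Fact p.Prime] [CharP R p]

theorem add_pow_one_add_char_pow (x y : R) (n : ℕ) :
    (x + y) ^ (1 + p ^ n) = x ^ (1 + p ^ n) + y ^ (1 + p ^ n) + y * x ^ p ^ n + y ^ p ^ n * x := by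
  rw [pow_add, pow_one, add_pow_char_pow]
  ring

theorem X_pow_one_add_char_pow_comp_X_add_C_sub (y : R) (n : ℕ) :
    (X ^ (1 + p ^ n) : R[X]).comp (X + C y) - X ^ (1 + p ^ n)
        - C ((X ^ (1 + p ^ n) : R[X]).eval y) = C y * X ^ p ^ n + C (y ^ p ^ n) * X := by
  rw [X_pow_comp, eval_pow, eval_X, add_pow_one_add_char_pow]
  simp only [C_pow]
  ring

theorem sum_range_pow_char_pow_sub_pow_char (x : R) (n : ℕ) :
    ∑ j ∈ Finset.range n, x ^ p ^ j - (∑ j ∈ Finset.range n, x ^ p ^ j) ^ p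
      = x - x ^ p ^ n := by
  rw [sum_pow_char, ← Finset.sum_sub_distrib]
  simp_rw [← pow_mul, ← pow_succ]
  rw [Finset.sum_range_sub' (fun j => x ^ p ^ j), pow_zero, pow_one]

theorem exists_coeff_zero_eq_zero_and_sub_pow_char_eq (c : R) (n : ℕ) :
    ∃ T : R[X], T.coeff 0 = 0 ∧ T - T ^ p = C c * X - C (c ^ p ^ n) * X ^ p ^ n := by
  refine ⟨∑ j ∈ Finset.range n, (C c * X) ^ p ^ j, ?_, ?_⟩
  · simp [coeff_zero_eq_eval_zero, eval_finsetSum, (Fact.out : p.Prime).ne_zero]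
  · rw [sum_range_pow_char_pow_sub_pow_char, mul_pow, C_pow]

end CharP

theorem Polynomial.eq_zero_of_coeff_zero_eq_zero_of_natDegree_sub_pow_le_one {R : Type*}
    [Ring R] [NoZeroDivisors R] {p : ℕ} (hp : 1 < p) {A : R[X]} (h0 : A.coeff 0 = 0)
    (h : (A - A ^ p).natDegree ≤ 1) : A = 0 := by
  by_contra hA
  have hdeg : 1 ≤ A.natDegree := by
    by_contra! hd
    exact hA (by rw [eq_C_of_natDegree_eq_zero (Nat.lt_one_iff.mp hd), h0, C_0])
  have hlt : A.natDegree < (A ^ p).natDegree := by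
    rw [natDegree_pow]
    nlinarith
  rw [natDegree_sub_eq_right_of_natDegree_lt hlt, natDegree_pow] at h
  nlinarith

theorem Polynomial.ncard_setOf_eval_eq_zero {k : Type*} [Field k] [IsAlgClosed k] {f : k[X]}
    (hf : f.Separable) : {x | f.eval x = 0}.ncard = f.natDegree := by
  classical
  have hroots : {x | f.eval x = 0} = (f.roots.toFinset : Set k) := by
    ext x
    simp [mem_roots hf.ne_zero]
  rw [hroots, Set.ncard_coe_finset, Multiset.toFinset_card_of_nodup (nodup_roots hf),
    IsAlgClosed.card_roots_eq_natDegree]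

theorem separable_X_pow_char_pow_add_X {R : Type*} [CommRing R] (p : ℕ) [CharP R p] {m : ℕ}
    (hm : m ≠ 0) :
    (X ^ p ^ m + X : R[X]).Separable := by
  have hderiv : derivative (X ^ p ^ m + X : R[X]) = 1 := by
    have hq : ((p ^ m : ℕ) : R) = 0 := (CharP.cast_eq_zero_iff R p _).mpr (dvd_pow_self p hm)
    rw [derivative_add, derivative_X_pow, derivative_X, hq, C_0, zero_mul, zero_add]
  rw [Separable, hderiv]
  exact isCoprime_one_right

theorem Polynomial.natDegree_X_pow_add_X {R : Type*} [Semiring R] [Nontrivial R] {q : ℕ}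
    (hq : 1 < q) : (X ^ q + X : R[X]).natDegree = q := by
  rw [natDegree_add_eq_left_of_natDegree_lt] <;> simp [hq]

theorem mem_Sf_X_pow_one_add_char_pow_iff {p : ℕ} [Fact p.Prime] {k : Type*} [Field k]
    [IsAlgClosed k] [CharP k p] (n : ℕ) (y : k) :
    y ∈ Sf p ((X : k[X]) ^ (1 + p ^ n)) ↔ y ^ p ^ (2 * n) + y = 0 := by
  have hpow : y ^ p ^ (2 * n) = (y ^ p ^ n) ^ p ^ n := by rw [two_mul, pow_add, pow_mul]
  simp only [Sf, Set.mem_ofPred_eq, X_pow_one_add_char_pow_comp_X_add_C_sub, hpow]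
  constructor
  · rintro ⟨P, hP0, hP⟩
    obtain ⟨d, hd⟩ := IsAlgClosed.exists_pow_nat_eq y (expChar_pow_pos k p n)
    obtain ⟨T, hT0, hT⟩ := exists_coeff_zero_eq_zero_and_sub_pow_char_eq (p := p) d n
    have hPT : (P + T) - (P + T) ^ p = C (y ^ p ^ n + d) * X := by
      rw [add_pow_char, show P + T - (P ^ p + T ^ p) = (P - P ^ p) + (T - T ^ p) by ring,
        ← hP, hT, hd, C_add]
      ring
    have hzero := eq_zero_of_coeff_zero_eq_zero_of_natDegree_sub_pow_le_one (A := P + T)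
      (Fact.out : p.Prime).one_lt (by rw [coeff_add, hP0, hT0, add_zero])
      (hPT ▸ (natDegree_C_mul_le _ _).trans natDegree_X_le)
    rw [hzero, zero_pow (Fact.out : p.Prime).ne_zero, sub_zero, eq_comm, mul_eq_zero,
      C_eq_zero, or_iff_left X_ne_zero, add_eq_zero_iff_eq_neg] at hPT
    rw [hPT, neg_pow, neg_one_pow_char_pow, hd]
    ring
  · intro hy
    obtain ⟨T, hT0, hT⟩ := exists_coeff_zero_eq_zero_and_sub_pow_char_eq (p := p) (y ^ p ^ n) n
    refine ⟨T, hT0, ?_⟩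
    rw [hT, eq_neg_of_add_eq_zero_left hy, C_neg]
    ring

/-- Theorem 1 c), second half: for `f = X^{1+p^n}`, the set `S(f)` is the set of roots of
`Y^{p^{2n}} + Y`, of cardinality `p^{2n}`; i.e. `|G_{∞,1}(X^{1+p^n})| = p^{2n+1}`. -/
theorem Sf_monomial_one_add_pow (p : ℕ) (hp : p.Prime)
    (k : Type*) [Field k] [IsAlgClosed k] [CharP k p]
    (n : ℕ) (hn : 1 ≤ n) :
    Sf p ((X : k[X]) ^ (1 + p ^ n)) = {y : k | y ^ p ^ (2 * n) + y = 0} ∧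
    (Sf p ((X : k[X]) ^ (1 + p ^ n))).ncard = p ^ (2 * n) := by
  have : Fact p.Prime := ⟨hp⟩
  have hSf : Sf p ((X : k[X]) ^ (1 + p ^ n)) = {y : k | y ^ p ^ (2 * n) + y = 0} :=
    Set.ext (mem_Sf_X_pow_one_add_char_pow_iff n)
  have h2n : 2 * n ≠ 0 := by omega
  refine ⟨hSf, ?_⟩
  have hroots := ncard_setOf_eval_eq_zero (separable_X_pow_char_pow_add_X (R := k) p h2n)
  rw [natDegree_X_pow_add_X (Nat.one_lt_pow h2n hp.one_lt)] at hroots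
  simpa [hSf] using hroots
end

section
/- (Lemma 4.13 i), bound for p = 2.) Let p = 2, and let f ∈ k[X] with f(0) = 0, m := deg f odd, m ≥ 2, and genus (m−1)/2 > 1. Write m − 1 = ℓ·2^s with ℓ odd and s = v_2(m−1) ≥ 1, and assume ℓ > 1. Then |S(f)| ≤ 2^{s−1}; equivalently, |G_{∞,1}(f)| ≤ 2^s. -/
/-!
Put `j := m - 2^s`, an odd number. If `y ∈ S(f)` with `f(X+y) - f(X) - f(y) = P - P²`, then
`2 deg P = deg (P - P²) < m ≤ 2j` (this is where `ℓ > 1` enters), and `P²` has no terms of odd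
degree, so the coefficient of `X^j` on the right vanishes. On the left it is `g(y)` with
`g := D⁽ʲ⁾f - f_j`, `D⁽ʲ⁾` the `j`-th Hasse derivative. Since `j + 1` is even,
`g' = (j+1) D⁽ʲ⁺¹⁾f = 0`, so `g(Y) = q(Y²)`; and by Lucas's theorem `binom(m, 2^s)` is odd, so
`g` has degree exactly `m - j = 2^s`. Hence `|S(f)| ≤ #{roots of q} ≤ deg q = 2^(s-1)`.
-/

open Polynomial

theorem Nat.odd_choose_two_pow_mul_add_one {ℓ s : ℕ} (hℓ : Odd ℓ) (hs : s ≠ 0) :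
    Odd ((2 ^ s * ℓ + 1).choose (2 ^ s)) := by
  have : Fact (Nat.Prime 2) := ⟨Nat.prime_two⟩
  obtain ⟨t, rfl⟩ := Nat.exists_eq_add_one_of_ne_zero hs
  have hlucas :
      (2 * (2 ^ t * ℓ) + 1).choose (2 * 2 ^ t) ≡ (2 ^ t * ℓ).choose (2 ^ t) [MOD 2] := by
    simpa [Nat.mul_add_mod, Nat.mul_add_div] using
      Choose.choose_modEq_choose_mod_mul_choose_div_nat (p := 2)
        (n := 2 * (2 ^ t * ℓ) + 1) (k := 2 * 2 ^ t)
  have hpow : (2 ^ t * ℓ).choose (2 ^ t) ≡ ℓ [MOD 2] := by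
    simpa using Choose.choose_pow_mul_pow_mul_modEq_choose_nat (p := 2) (k := t) (a := ℓ) (b := 1)
  rw [pow_succ', mul_assoc]
  simpa [Nat.odd_iff, Nat.ModEq, Nat.odd_iff.mp hℓ] using hlucas.trans hpow

namespace Polynomial

section CommRing

variable {R : Type*} [CommRing R]

theorem derivative_hasseDeriv_eq_zero (p : ℕ) [CharP R p] {j : ℕ} (hj : p ∣ j + 1) (f : R[X]) :
    derivative (hasseDeriv j f) = 0 := by
  rw [← hasseDeriv_one', ← LinearMap.comp_apply, hasseDeriv_comp, Nat.choose_one_right,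
    add_comm, LinearMap.smul_apply, nsmul_eq_mul, (CharP.cast_eq_zero_iff (R[X]) p _).mpr hj,
    zero_mul]

theorem natDegree_taylor_sub_sub_C_lt {f : R[X]} (hf : 0 < f.natDegree) (y : R) :
    (taylor y f - f - C (f.eval y)).natDegree < f.natDegree := by
  have hf0 : f ≠ 0 := ne_zero_of_natDegree_gt hf
  have hlt : (taylor y f - f).degree < f.degree := by
    simpa only [degree_taylor] using degree_sub_lt_left (degree_taylor f y)
      (mt (taylor_eq_zero y f).mp hf0) (leadingCoeff_taylor y f)
  have hC : (C (f.eval y)).degree < f.degree :=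
    degree_C_le.trans_lt (natDegree_pos_iff_degree_pos.mp hf)
  by_cases hQ : taylor y f - f - C (f.eval y) = 0
  · simpa [hQ] using hf
  exact natDegree_lt_natDegree hQ ((degree_sub_le _ _).trans_lt (max_lt hlt hC))

theorem natDegree_hasseDeriv_of_choose_ne_zero [NoZeroDivisors R] {f : R[X]} {j : ℕ}
    (hj : (f.natDegree.choose j : R) ≠ 0) : (hasseDeriv j f).natDegree = f.natDegree - j := by
  have hjf : j ≤ f.natDegree := by
    by_contra! h
    simp [Nat.choose_eq_zero_of_lt h] at hj
  rcases eq_or_ne f 0 with rfl | hf0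
  · simp
  refine natDegree_eq_of_le_of_coeff_ne_zero (natDegree_hasseDeriv_le f j) ?_
  rw [hasseDeriv_coeff, Nat.sub_add_cancel hjf]
  exact mul_ne_zero hj (leadingCoeff_ne_zero.mpr hf0)

theorem coeff_sub_pow_eq_zero_of_natDegree_lt [IsDomain R] (p : ℕ) [ExpChar R p] {P : R[X]}
    {j : ℕ} (hj : ¬ p ∣ j) (hdeg : (P - P ^ p).natDegree < p * j) : (P - P ^ p).coeff j = 0 := by
  have hp : 1 < p := lt_of_le_of_ne (expChar_pos R p) (by rintro rfl; exact hj (one_dvd j))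
  have hpow : (P ^ p).coeff j = 0 := by
    rw [← map_frobenius_expand, coeff_map, coeff_expand (by omega), if_neg hj, map_zero]
  rw [coeff_sub, hpow, sub_zero]
  rcases Nat.eq_zero_or_pos P.natDegree with h0 | hpos
  · rw [eq_C_of_natDegree_eq_zero h0, coeff_C, if_neg (by rintro rfl; exact hj (dvd_zero p))]
  · have hdegP : (P - P ^ p).natDegree = p * P.natDegree := by
      rw [natDegree_sub_eq_right_of_natDegree_lt, natDegree_pow]
      rw [natDegree_pow]
      exact lt_mul_left hpos hp
    rw [hdegP] at hdeg
    exact coeff_eq_zero_of_natDegree_lt (Nat.lt_of_mul_lt_mul_left hdeg)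

end CommRing

theorem ncard_setOf_isRoot_le_of_derivative_eq_zero {K : Type*} [Field K] (p : ℕ)
    [ExpChar K p] {g : K[X]} (hg0 : g ≠ 0) (hg : derivative g = 0) :
    {y | g.IsRoot y}.ncard ≤ g.natDegree / p := by
  obtain ⟨q, rfl⟩ : ∃ q, expand K p q = g := ⟨_, expand_contract' p hg⟩
  have hq : q ≠ 0 := by rintro rfl; simp at hg0
  rw [natDegree_expand, Nat.mul_div_cancel _ (expChar_pos K p)]
  calc {y | (expand K p q).IsRoot y}.ncard ≤ (q.rootSet K).ncard :=
        Set.ncard_le_ncard_of_injOn (· ^ p) (fun y hy => ?_)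
          (fun a _ b _ h => frobenius_inj K p h) (rootSet_finite q K)
    _ ≤ q.natDegree := ncard_rootSet_le q K
  simpa [mem_rootSet, hq, expand_eval] using hy

end Polynomial

theorem Sf_subset_setOf_isRoot {k : Type*} [Field k] (p : ℕ) [ExpChar k p] {f : k[X]}
    (hf : 0 < f.natDegree) {j : ℕ} (hj : ¬ p ∣ j) (hjf : f.natDegree ≤ p * j) :
    Sf p f ⊆ {y | (hasseDeriv j f - C (f.coeff j)).IsRoot y} := by
  rintro y ⟨P, -, hP⟩
  rw [← taylor_apply] at hP
  have hj0 : j ≠ 0 := by rintro rfl; exact hj (dvd_zero p)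
  have hcoeff := coeff_sub_pow_eq_zero_of_natDegree_lt p hj
    ((hP ▸ natDegree_taylor_sub_sub_C_lt hf y).trans_le hjf)
  rw [← hP, coeff_sub, coeff_sub, taylor_coeff, coeff_C, if_neg hj0, sub_zero] at hcoeff
  simpa [IsRoot, sub_eq_zero] using hcoeff

theorem Sf_finite_and_ncard_le {k : Type*} [Field k] (p : ℕ) [Fact p.Prime] [CharP k p]
    {f : k[X]} {j : ℕ} (hj : p ∣ j + 1) (hjf : j < f.natDegree) (hfj : f.natDegree ≤ p * j)
    (hchoose : (f.natDegree.choose j : k) ≠ 0) :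
    (Sf p f).Finite ∧ (Sf p f).ncard ≤ (f.natDegree - j) / p := by
  set g := hasseDeriv j f - C (f.coeff j)
  have hpj : ¬ p ∣ j := fun h =>
    (Fact.out : p.Prime).one_lt.ne' (Nat.dvd_one.mp ((Nat.dvd_add_right h).mp hj))
  have hSg : Sf p f ⊆ {y | g.IsRoot y} := Sf_subset_setOf_isRoot p (by omega) hpj hfj
  have hgdeg : g.natDegree = f.natDegree - j := by
    rw [natDegree_sub_C, natDegree_hasseDeriv_of_choose_ne_zero hchoose]
  have hg0 : g ≠ 0 := ne_zero_of_natDegree_gt (n := 0) (by omega)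
  have hgder : derivative g = 0 := by
    rw [derivative_sub, derivative_C, sub_zero, derivative_hasseDeriv_eq_zero p hj]
  have hfin := finite_setOfPred_isRoot hg0
  refine ⟨hfin.subset hSg, ?_⟩
  calc (Sf p f).ncard ≤ {y | g.IsRoot y}.ncard := Set.ncard_le_ncard hSg hfin
    _ ≤ (f.natDegree - j) / p := hgdeg ▸ ncard_setOf_isRoot_le_of_derivative_eq_zero p hg0 hgder

theorem card_Sf_le_char_two_general (k : Type*) [Field k] [CharP k 2]
    (f : k[X]) (m : ℕ) (hm : f.natDegree = m)
    (ℓ s : ℕ) (hs : 1 ≤ s) (hℓodd : Odd ℓ) (hℓ : 1 < ℓ)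
    (hml : m - 1 = ℓ * 2 ^ s) :
    (Sf 2 f).Finite ∧ (Sf 2 f).ncard ≤ 2 ^ (s - 1) := by
  have : Fact (Nat.Prime 2) := ⟨Nat.prime_two⟩
  subst hm
  obtain ⟨B, hB⟩ : ∃ B, 2 ^ s = 2 * B := ⟨2 ^ (s - 1), by rw [← pow_succ']; congr; omega⟩
  have hB0 : 0 < B := by
    have : 0 < 2 ^ s := by positivity
    omega
  have hℓ3 : 3 ≤ ℓ := by obtain ⟨r, rfl⟩ := hℓodd; omega
  have hBℓ : 3 * B ≤ B * ℓ := by rw [mul_comm]; exact Nat.mul_le_mul_left _ hℓ3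
  have hm : f.natDegree = 2 * (B * ℓ) + 1 := by
    have hpos : 0 < ℓ * 2 ^ s := by positivity
    rw [hB, show ℓ * (2 * B) = 2 * (B * ℓ) by ring] at hml hpos
    omega
  have hchoose : (f.natDegree.choose (f.natDegree - 2 ^ s) : k) ≠ 0 := by
    rw [Nat.choose_symm (by omega), show f.natDegree = 2 ^ s * ℓ + 1 by rw [hB, mul_assoc, hm],
      Ne, CharP.cast_eq_zero_iff k 2, ← even_iff_two_dvd, Nat.not_even_iff_odd]
    exact Nat.odd_choose_two_pow_mul_add_one hℓodd (by omega)
  have hbound := Sf_finite_and_ncard_le 2 (j := f.natDegree - 2 * B)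
    ⟨B * ℓ - B + 1, by omega⟩ (by omega) (by omega) (hB ▸ hchoose)
  rw [Nat.sub_sub_self (by omega), ← hB] at hbound
  rwa [← Nat.pow_div hs two_pos, pow_one]

/-- Lemma 4.13 i) (bound for `p = 2`): if `m = deg f` is odd, the genus `(m-1)/2 > 1`,
and `m - 1 = ℓ·2^s` with `ℓ` odd, `ℓ > 1`, `s ≥ 1`, then `|S(f)| ≤ 2^{s-1}`,
i.e. `|G_{∞,1}(f)| ≤ 2^s`. -/
theorem card_Sf_le_char_two (k : Type*) [Field k] [IsAlgClosed k] [CharP k 2]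
    (f : k[X]) (hf0 : f.coeff 0 = 0) (m : ℕ) (hm : f.natDegree = m)
    (hodd : Odd m) (hm2 : 2 ≤ m) (hg : 2 < m - 1)
    (ℓ s : ℕ) (hs : 1 ≤ s) (hℓodd : Odd ℓ) (hℓ : 1 < ℓ)
    (hml : m - 1 = ℓ * 2 ^ s) :
    (Sf 2 f).Finite ∧ (Sf 2 f).ncard ≤ 2 ^ (s - 1) :=
  card_Sf_le_char_two_general k f m hm ℓ s hs hℓodd hℓ hml
end

section
/- (Lemma 4.13 ii), bound for p > 2.) Let p > 2, and let f ∈ k[X] with f(0) = 0, m := deg f, p ∤ m, m ≥ 2, and genus (m−1)(p−1)/2 > 1. Write m − 1 = ℓ·p^s with p ∤ ℓ and s = v_p(m−1) ≥ 1, and assume ℓ > 1. Then |S(f)| ≤ p^s; equivalently, |G_{∞,1}(f)| ≤ p^{s+1}. -/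
open Polynomial

/-!
For `y ∈ S(f)` write `f(X+y) - f(X) - f(y) = P - P^p`. The left side has degree `< m`, which
forces `deg P < j := m - p^s = (ℓ-1)p^s + 1` (for nonconstant `P`, `p · deg P < m ≤ p · j`), and
`p ∤ j` kills the coefficient of `X^j` in `P^p`. So the coefficient of `X^j` on the left,
`(Δ^{(j)} f)(y) - f_j` with `Δ^{(j)}` the `j`-th Hasse derivative, vanishes. As a polynomial in `y`
this has degree `m - j = p^s` and leading coefficient `binom(m, p^s) · lc(f)`, which is nonzero
because `binom(ℓ p^s + 1, p^s) ≡ ℓ (mod p)` by Lucas.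
-/

namespace Choose

theorem choose_pow_mul_add_one_modEq (p : ℕ) [Fact p.Prime] (a : ℕ) {s : ℕ} (hs : s ≠ 0) :
    (p ^ s * a + 1).choose (p ^ s) ≡ a [MOD p] := by
  obtain ⟨t, rfl⟩ := Nat.exists_eq_succ_of_ne_zero hs
  have hp := (Fact.out : p.Prime).one_lt
  have hmod : (p * (p ^ t * a) + 1) % p = 1 := by rw [Nat.mul_add_mod, Nat.mod_eq_of_lt hp]
  have hdiv : (p * (p ^ t * a) + 1) / p = p ^ t * a := by
    rw [Nat.mul_add_div (by omega), Nat.div_eq_of_lt hp, add_zero]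
  have hlucas := choose_modEq_choose_mod_mul_choose_div_nat (p := p)
    (n := p * (p ^ t * a) + 1) (k := p * p ^ t)
  rw [hmod, hdiv, Nat.mul_mod_right, Nat.mul_div_cancel_left _ (by omega), Nat.choose_zero_right,
    one_mul] at hlucas
  calc (p ^ t.succ * a + 1).choose (p ^ t.succ)
      = (p * (p ^ t * a) + 1).choose (p * p ^ t) := by rw [pow_succ', mul_assoc]
    _ ≡ (p ^ t * a).choose (p ^ t * 1) [MOD p] := by rw [mul_one]; exact hlucas
    _ ≡ a.choose 1 [MOD p] := choose_pow_mul_pow_mul_modEq_choose_nat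
    _ = a := a.choose_one_right

end Choose

theorem Nat.Prime.exists_eq_add_pow_not_dvd_le_mul {p m ℓ s : ℕ} (hp : p.Prime) (hs : s ≠ 0)
    (hℓ : 1 < ℓ) (hml : m - 1 = ℓ * p ^ s) : ∃ j, m = j + p ^ s ∧ ¬ p ∣ j ∧ m ≤ p * j := by
  obtain ⟨l, rfl⟩ : ∃ l, ℓ = l + 1 := ⟨ℓ - 1, by omega⟩
  have hm : m = l * p ^ s + 1 + p ^ s := by
    have : 0 < p ^ s := pow_pos hp.pos s
    rw [add_mul, one_mul] at hml
    omega
  refine ⟨l * p ^ s + 1, hm, fun h => hp.one_lt.ne' (Nat.dvd_one.1 ?_), ?_⟩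
  · exact (Nat.dvd_add_right (dvd_mul_of_dvd_right (dvd_pow_self p hs) l)).1 h
  · have h2 : 2 * (l * p ^ s) ≤ p * (l * p ^ s) := Nat.mul_le_mul_right _ hp.two_le
    have h1 : p ^ s ≤ l * p ^ s := Nat.le_mul_of_pos_left _ (by omega)
    rw [hm, Nat.mul_add, mul_one]
    linarith [hp.two_le]

namespace Polynomial

theorem natDegree_taylor_sub_le {R : Type*} [CommRing R] (f : R[X]) (r : R) :
    (taylor r f - f).natDegree ≤ f.natDegree - 1 := by
  rw [natDegree_le_iff_coeff_eq_zero]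
  intro N hN
  rcases (show f.natDegree ≤ N by omega).eq_or_lt with rfl | hlt
  · rw [coeff_sub, coeff_taylor_natDegree, leadingCoeff, sub_self]
  · rw [coeff_sub, coeff_eq_zero_of_natDegree_lt (f.natDegree_taylor r ▸ hlt),
      coeff_eq_zero_of_natDegree_lt hlt, sub_self]

theorem natDegree_lt_of_natDegree_sub_pow_lt {R : Type*} [CommRing R] [NoZeroDivisors R]
    {P : R[X]} {n j : ℕ} (hn : 1 < n) (h : (P - P ^ n).natDegree < n * j) :
    P.natDegree < j := by
  rcases Nat.eq_zero_or_pos P.natDegree with h0 | hpos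
  · rw [h0]
    exact Nat.pos_of_mul_pos_left (h.trans_le' (Nat.zero_le _))
  · have hpow : (P ^ n).natDegree = n * P.natDegree := natDegree_pow P n
    rw [natDegree_sub_eq_right_of_natDegree_lt (by rw [hpow]; nlinarith), hpow] at h
    exact Nat.lt_of_mul_lt_mul_left h

theorem coeff_pow_expChar_eq_zero {R : Type*} [CommSemiring R] {p : ℕ} [ExpChar R p]
    (P : R[X]) {j : ℕ} (hj : ¬ p ∣ j) : (P ^ p).coeff j = 0 := by
  rw [← map_frobenius_expand, coeff_map, coeff_expand (expChar_pos R p), if_neg hj, map_zero]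

theorem isRoot_hasseDeriv_sub_C_coeff {R : Type*} [CommRing R] [IsDomain R] {p : ℕ}
    [Fact p.Prime] [CharP R p] {f P : R[X]} {r c : R} (hP : taylor r f - f - C c = P - P ^ p)
    {j : ℕ} (hj : ¬ p ∣ j) (hfj : f.natDegree ≤ p * j) :
    (hasseDeriv j f - C (f.coeff j)).IsRoot r := by
  have hj0 : j ≠ 0 := by rintro rfl; exact hj (dvd_zero p)
  have hPdeg : (P - P ^ p).natDegree < p * j := by
    have : 0 < p * j := Nat.mul_pos (Fact.out : p.Prime).pos (Nat.pos_of_ne_zero hj0)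
    calc (P - P ^ p).natDegree = (taylor r f - f - C c).natDegree := by rw [hP]
      _ ≤ max (f.natDegree - 1) 0 :=
        natDegree_sub_le_of_le (natDegree_taylor_sub_le f r) (natDegree_C c).le
      _ < p * j := by omega
  have hPj := natDegree_lt_of_natDegree_sub_pow_lt (Fact.out : p.Prime).one_lt hPdeg
  have hcoeff := congr_arg (coeff · j) hP
  simp only [coeff_sub, taylor_coeff, coeff_C, if_neg hj0, coeff_eq_zero_of_natDegree_lt hPj,
    coeff_pow_expChar_eq_zero P hj, sub_zero] at hcoeff
  rwa [IsRoot.def, eval_sub, eval_C]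

theorem finite_and_ncard_le_natDegree_of_forall_isRoot {R : Type*} [CommRing R] [IsDomain R]
    {g : R[X]} (hg : g ≠ 0) {S : Set R} (hS : ∀ x ∈ S, g.IsRoot x) :
    S.Finite ∧ S.ncard ≤ g.natDegree := by
  have hsub : S ⊆ g.rootSet R := fun x hx => (mem_rootSet_of_ne hg).2 (hS x hx)
  exact ⟨(g.rootSet_finite R).subset hsub,
    (Set.ncard_le_ncard hsub (g.rootSet_finite R)).trans (g.ncard_rootSet_le R)⟩

end Polynomial

theorem card_Sf_le_odd_char_general (p : ℕ) (hp : p.Prime)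
    (k : Type*) [Field k] [CharP k p]
    (f : k[X]) (m : ℕ) (hm : f.natDegree = m)
    (ℓ s : ℕ) (hs : 1 ≤ s) (hpl : ¬ p ∣ ℓ) (hℓ : 1 < ℓ)
    (hml : m - 1 = ℓ * p ^ s) :
    (Sf p f).Finite ∧ (Sf p f).ncard ≤ p ^ s := by
  have := Fact.mk hp
  have hq : 0 < p ^ s := pow_pos hp.pos s
  obtain ⟨j, hmj, hpj, hmpj⟩ := hp.exists_eq_add_pow_not_dvd_le_mul (by omega) hℓ hml
  set g := hasseDeriv j f - C (f.coeff j)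
  have hroot : ∀ y ∈ Sf p f, g.IsRoot y := fun y ⟨P, _, hP⟩ =>
    isRoot_hasseDeriv_sub_C_coeff (by rwa [← taylor_apply] at hP) hpj (hm ▸ hmpj)
  have hchoose : ¬ p ∣ m.choose j := by
    rw [Nat.choose_symm_of_eq_add hmj, show m = p ^ s * ℓ + 1 by rw [mul_comm] at hml; omega,
      (Choose.choose_pow_mul_add_one_modEq p ℓ (by omega)).dvd_iff dvd_rfl]
    exact hpl
  have hlead : g.coeff (p ^ s) ≠ 0 := by
    have hf : f ≠ 0 := by rintro rfl; simp at hm; omega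
    rw [coeff_sub, coeff_C_of_ne_zero (pow_ne_zero s hp.ne_zero), sub_zero, hasseDeriv_coeff,
      add_comm, ← hmj, ← hm]
    exact mul_ne_zero (by rwa [hm, Ne, CharP.cast_eq_zero_iff k p]) (leadingCoeff_ne_zero.2 hf)
  have hdeg : g.natDegree ≤ p ^ s :=
    (natDegree_sub_le_of_le (natDegree_hasseDeriv_le f j) (natDegree_C _).le).trans (by omega)
  obtain ⟨hfin, hcard⟩ := finite_and_ncard_le_natDegree_of_forall_isRoot
    (fun h => hlead (by rw [h, coeff_zero])) hroot
  exact ⟨hfin, hcard.trans hdeg⟩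

/-- Lemma 4.13 ii) (bound for `p > 2`): if `m = deg f` is prime to `p`, the genus
`(m-1)(p-1)/2 > 1`, and `m - 1 = ℓ·p^s` with `p ∤ ℓ`, `ℓ > 1`, `s ≥ 1`, then
`|S(f)| ≤ p^s`, i.e. `|G_{∞,1}(f)| ≤ p^{s+1}`. -/
theorem card_Sf_le_odd_char (p : ℕ) (hp : p.Prime) (hp2 : 2 < p)
    (k : Type*) [Field k] [IsAlgClosed k] [CharP k p]
    (f : k[X]) (hf0 : f.coeff 0 = 0) (m : ℕ) (hm : f.natDegree = m)
    (hpm : ¬ p ∣ m) (hm2 : 2 ≤ m) (hg : 2 < (m - 1) * (p - 1))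
    (ℓ s : ℕ) (hs : 1 ≤ s) (hpl : ¬ p ∣ ℓ) (hℓ : 1 < ℓ)
    (hml : m - 1 = ℓ * p ^ s) :
    (Sf p f).Finite ∧ (Sf p f).ncard ≤ p ^ s :=
  card_Sf_le_odd_char_general p hp k f m hm ℓ s hs hpl hℓ hml
end

section
/- (Lemma 4.13 ii), optimality of the bound for p > 2.) Let p > 2, s ≥ 1, and f(X) := X^{1+2p^s} − X^{2+p^s}. Then S(f) = {y ∈ k : y^{p^s} = y} (the finite field 𝔽_{p^s} inside k), so |S(f)| = p^s and the bound |G_{∞,1}(f)| ≤ p^{s+1} of Lemma 4.13 is attained. -/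
/-! With `q = p ^ s`, additivity of Frobenius gives
`f(X + y) - f(X) - f(y) = 2(y^q - y) X^(q+1) + (2y^(q+1) - y²) X^q + (y^(2q) - 2y^(q+1)) X
  - y^q X² + y X^(2q)`.
If `y^q = y` this is `h^q - h` for `h = y²X + yX²`, and `h^q - h = P - P^p` for the telescoping
sum `P = -∑_{t<s} h^(p^t)`. Conversely, if it equals `P - P^p`, its degree `≤ 2q < (q+1)p`
forces `deg P < q + 1`, while `P^p` has no monomial `X^(q+1)` because `p ∤ q + 1`; so the
coefficient `2(y^q - y)` vanishes, and `2 ≠ 0` as `p` is odd. Finally the fixed points of the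
`s`-th Frobenius in an algebraically closed field are the `q` roots of the separable `X^q - X`.
-/

open Polynomial

section CharP
variable {R : Type*} [CommRing R] {p : ℕ} [Fact p.Prime] [CharP R p]

lemma coeff_pow_char_eq_zero {n : ℕ} (hn : ¬ p ∣ n) (P : R[X]) : (P ^ p).coeff n = 0 := by
  rw [← map_frobenius_expand, coeff_map, coeff_expand (Fact.out : p.Prime).pos, if_neg hn,
    map_zero]

lemma coeff_sub_pow_char_eq_zero [IsDomain R] {m : ℕ} (hm : ¬ p ∣ m) {P : R[X]}
    (hdeg : (P - P ^ p).natDegree < m * p) : (P - P ^ p).coeff m = 0 := by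
  have hm0 : m ≠ 0 := by rintro rfl; exact hm (dvd_zero p)
  have hP : P.natDegree < m := by
    by_contra! hle
    have hlt : P.natDegree < (P ^ p).natDegree := by
      rw [natDegree_pow]
      exact lt_mul_left (by omega) (Fact.out : p.Prime).one_lt
    rw [natDegree_sub_eq_right_of_natDegree_lt hlt, natDegree_pow, mul_comm] at hdeg
    exact (Nat.mul_le_mul_right p hle).not_gt hdeg
  rw [coeff_sub, coeff_pow_char_eq_zero hm, coeff_eq_zero_of_natDegree_lt hP, sub_zero]

lemma pow_char_pow_sub_self_eq (x : R) (s : ℕ) :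
    x ^ p ^ s - x =
      (-∑ t ∈ Finset.range s, x ^ p ^ t) - (-∑ t ∈ Finset.range s, x ^ p ^ t) ^ p := by
  rw [neg_pow, neg_one_pow_char, sum_pow_char]
  simp only [← pow_mul, ← pow_succ]
  have := Finset.sum_range_sub (fun t => x ^ p ^ t) s
  rw [Finset.sum_sub_distrib, pow_zero, pow_one] at this
  linear_combination -this

end CharP

noncomputable def additivityDefect {R : Type*} [CommRing R] (f : R[X]) (y : R) : R[X] :=
  f.comp (X + C y) - f - C (f.eval y)

section Sf
variable {k : Type*} [Field k] {p : ℕ} [Fact p.Prime] [CharP k p] {f : k[X]} {y : k}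

lemma mem_Sf_of_additivityDefect_eq_pow_sub_self {h : k[X]} (h0 : h.coeff 0 = 0) {s : ℕ}
    (hΔ : additivityDefect f y = h ^ p ^ s - h) : y ∈ Sf p f := by
  refine ⟨-∑ t ∈ Finset.range s, h ^ p ^ t, ?_, ?_⟩
  · rw [coeff_neg, finsetSum_coeff, neg_eq_zero]
    refine Finset.sum_eq_zero fun t _ => ?_
    rw [coeff_zero_eq_eval_zero, eval_pow, ← coeff_zero_eq_eval_zero, h0,
      zero_pow (pow_ne_zero t (Fact.out : p.Prime).ne_zero)]
  · rw [← pow_char_pow_sub_self_eq, ← hΔ, additivityDefect]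

lemma coeff_additivityDefect_eq_zero_of_mem_Sf {m : ℕ} (hy : y ∈ Sf p f) (hm : ¬ p ∣ m)
    (hdeg : (additivityDefect f y).natDegree < m * p) : (additivityDefect f y).coeff m = 0 := by
  obtain ⟨P, -, hP⟩ := hy
  rw [additivityDefect, hP] at hdeg ⊢
  exact coeff_sub_pow_char_eq_zero hm hdeg

end Sf

section
variable {R : Type*} [CommRing R] {p : ℕ} [Fact p.Prime] [CharP R p] {s : ℕ}

lemma additivityDefect_X_pow_sub_X_pow (y : R) :
    additivityDefect (X ^ (1 + 2 * p ^ s) - X ^ (2 + p ^ s)) y =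
      C (2 * (y ^ p ^ s - y)) * X ^ (p ^ s + 1) + C (2 * y ^ (p ^ s + 1) - y ^ 2) * X ^ p ^ s
        + C (y ^ (2 * p ^ s) - 2 * y ^ (p ^ s + 1)) * X - C (y ^ p ^ s) * X ^ 2
        + C y * X ^ (2 * p ^ s) := by
  have hfrob : (X + C y) ^ p ^ s = X ^ p ^ s + C (y ^ p ^ s) := by
    rw [add_pow_char_pow, C_pow]
  have h1 : (X + C y) ^ (1 + 2 * p ^ s) = (X + C y) * ((X + C y) ^ p ^ s) ^ 2 := by ring
  have h2 : (X + C y) ^ (2 + p ^ s) = (X + C y) ^ 2 * (X + C y) ^ p ^ s := by ring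
  simp only [additivityDefect, sub_comp, pow_comp, X_comp, h1, h2, hfrob, eval_sub, eval_pow,
    eval_X]
  simp only [map_sub, map_mul, map_pow, map_ofNat]
  ring

lemma natDegree_additivityDefect_X_pow_sub_X_pow_le (y : R) :
    (additivityDefect (X ^ (1 + 2 * p ^ s) - X ^ (2 + p ^ s)) y).natDegree ≤ 2 * p ^ s := by
  have := pow_pos (Fact.out : p.Prime).pos s
  rw [additivityDefect_X_pow_sub_X_pow]
  compute_degree
  omega

lemma coeff_additivityDefect_X_pow_sub_X_pow_succ (y : R) (hs : s ≠ 0) :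
    (additivityDefect (X ^ (1 + 2 * p ^ s) - X ^ (2 + p ^ s)) y).coeff (p ^ s + 1) =
      2 * (y ^ p ^ s - y) := by
  have := Nat.one_lt_pow hs (Fact.out : p.Prime).one_lt
  rw [additivityDefect_X_pow_sub_X_pow]
  simp only [coeff_add, coeff_sub, coeff_C_mul, coeff_X_pow, coeff_X, mul_ite, mul_one, mul_zero]
  split_ifs <;> first | ring1 | omega

lemma additivityDefect_X_pow_sub_X_pow_of_pow_eq_self {y : R} (hy : y ^ p ^ s = y) :
    additivityDefect (X ^ (1 + 2 * p ^ s) - X ^ (2 + p ^ s)) y =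
      (C (y ^ 2) * X + C y * X ^ 2) ^ p ^ s - (C (y ^ 2) * X + C y * X ^ 2) := by
  have hy2 : (y ^ 2) ^ p ^ s = y ^ 2 := by rw [← pow_mul, mul_comm, pow_mul, hy]
  have hy_succ : y ^ (p ^ s + 1) = y ^ 2 := by rw [pow_succ, hy, sq]
  have hy_two_mul : y ^ (2 * p ^ s) = y ^ 2 := by rw [pow_mul', hy]
  rw [additivityDefect_X_pow_sub_X_pow, add_pow_char_pow, mul_pow, mul_pow, ← C_pow, ← C_pow,
    hy, hy2, hy_succ, hy_two_mul, ← pow_mul']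
  simp only [map_sub, map_mul, map_ofNat]
  ring

end

section
variable {k : Type*} [Field k] {p : ℕ} [Fact p.Prime] [CharP k p] {s : ℕ}

theorem Sf_X_pow_sub_X_pow_eq (hp2 : p ≠ 2) (hs : s ≠ 0) :
    Sf p (X ^ (1 + 2 * p ^ s) - X ^ (2 + p ^ s) : k[X]) = {y | y ^ p ^ s = y} := by
  have hp : p.Prime := Fact.out
  ext y
  constructor
  · intro hy
    have hndvd : ¬ p ∣ p ^ s + 1 := fun h =>
      hp.one_lt.ne' (Nat.dvd_one.mp ((Nat.dvd_add_right (dvd_pow_self p hs)).mp h))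
    have hdeg := (natDegree_additivityDefect_X_pow_sub_X_pow_le y).trans_lt
      (show 2 * p ^ s < (p ^ s + 1) * p by nlinarith [Nat.mul_le_mul_left (p ^ s + 1) hp.two_le])
    have h := coeff_additivityDefect_eq_zero_of_mem_Sf hy hndvd hdeg
    rw [coeff_additivityDefect_X_pow_sub_X_pow_succ y hs] at h
    have h2 : (2 : k) ≠ 0 := by
      exact_mod_cast (CharP.cast_eq_zero_iff k p 2).not.mpr
        ((Nat.prime_dvd_prime_iff_eq hp Nat.prime_two).not.mpr hp2)
    exact sub_eq_zero.mp ((mul_eq_zero.mp h).resolve_left h2)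
  · intro hy
    exact mem_Sf_of_additivityDefect_eq_pow_sub_self (by simp)
      (additivityDefect_X_pow_sub_X_pow_of_pow_eq_self hy)

theorem ncard_setOf_pow_eq_self [IsAlgClosed k] (hs : s ≠ 0) :
    {y : k | y ^ p ^ s = y}.ncard = p ^ s := by
  have hp : p.Prime := Fact.out
  have hroots : {y : k | y ^ p ^ s = y} = (X ^ p ^ s - X : k[X]).rootSet k := by
    ext y
    simp [mem_rootSet, FiniteField.X_pow_card_pow_sub_X_ne_zero k hs hp.one_lt, sub_eq_zero]
  have hsep : (X ^ p ^ s - X : k[X]).Separable := galois_poly_separable p _ (dvd_pow_self p hs)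
  rw [hroots, ← Nat.card_coe_set_eq, Nat.card_eq_fintype_card,
    card_rootSet_eq_natDegree hsep (IsAlgClosed.splits _),
    FiniteField.X_pow_card_pow_sub_X_natDegree_eq k hs hp.one_lt]

end

/-- Lemma 4.13 ii), optimality for `p > 2`: for `f = X^{1+2p^s} - X^{2+p^s}` one has
`S(f) = 𝔽_{p^s} = {y : y^{p^s} = y}`, so `|S(f)| = p^s` and `|G_{∞,1}(f)| = p^{s+1}`. -/
theorem Sf_optimal_odd_char (p : ℕ) (hp : p.Prime) (hp2 : 2 < p)
    (k : Type*) [Field k] [IsAlgClosed k] [CharP k p]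
    (s : ℕ) (hs : 1 ≤ s) (f : k[X])
    (hf : f = X ^ (1 + 2 * p ^ s) - X ^ (2 + p ^ s)) :
    Sf p f = {y : k | y ^ p ^ s = y} ∧ (Sf p f).ncard = p ^ s := by
  have : Fact p.Prime := ⟨hp⟩
  have hS : Sf p f = {y : k | y ^ p ^ s = y} := hf ▸ Sf_X_pow_sub_X_pow_eq hp2.ne' (by omega)
  exact ⟨hS, hS ▸ ncard_setOf_pow_eq_self (by omega)⟩
end

section
/- (Lemma 4.13 i), optimality of the bound for p = 2.) Let p = 2, s ≥ 2, and f(X) := (X + X^{2^{s−1}})^7 ∈ k[X]. Then S(f) = {y ∈ k : y^{2^{s−1}} = y} (the finite field 𝔽_{2^{s−1}} inside k), so |S(f)| = 2^{s−1}; its reduced representative has conductor m = 1 + 3·2^s, and the bound |G_{∞,1}| ≤ 2^s of Lemma 4.13 is attained. -/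
open Polynomial

/-!
Write `q = 2 ^ n` and `u = X + X ^ q`; then `u (X + y) = u + a` with `a = y + y ^ q`. For
`f = u ^ 7` the polynomial `D = f (X + y) - f (X) - f (y)` has derivative `(u + a) ^ 6 - u ^ 6`,
whose top term is `a ^ 2 X ^ (4 q)`. A polynomial `P - P ^ 2` has the derivative of `P`, so its
derivative has degree less than half its own degree; as `deg D ≤ 7 q < 8 q`, this forces `a = 0`,
i.e. `y` is one of the `q` roots of the separable polynomial `X ^ q - X`.

For the reduced representative, each monomial `X ^ (2 ^ j * m)` of `f` with `j > 0` and `m` odd is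
congruent to `X ^ m` modulo the image of `P ↦ P ^ 2 - P`, and `m` is at most half the exponent,
so the odd monomial `X ^ (6 q + 1)` stays on top.
-/

section ArtinSchreier

variable {R : Type*} [CommRing R] (p : ℕ) [ExpChar R p]

def artinSchreierRange : AddSubgroup R :=
  ((frobenius R p : R →+* R).toAddMonoidHom - AddMonoidHom.id R).range

variable {p}

theorem mem_artinSchreierRange {x : R} :
    x ∈ artinSchreierRange p ↔ ∃ y : R, y ^ p - y = x := Iff.rfl

theorem pow_expChar_pow_sub_mem_artinSchreierRange (x : R) (n : ℕ) :
    x ^ p ^ n - x ∈ artinSchreierRange p := by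
  induction n with
  | zero => simp
  | succ n ih =>
    have h : (x ^ p ^ n) ^ p - x ^ p ^ n ∈ artinSchreierRange (R := R) p :=
      mem_artinSchreierRange.2 ⟨x ^ p ^ n, rfl⟩
    rw [pow_succ, pow_mul]
    simpa using add_mem h ih

theorem exists_odd_pow_sub_mem_artinSchreierRange [ExpChar R 2] (x : R) {e : ℕ} (he : Even e)
    (he0 : e ≠ 0) : ∃ m, Odd m ∧ 2 * m ≤ e ∧ x ^ e - x ^ m ∈ artinSchreierRange 2 := by
  obtain ⟨j, m, hm, rfl⟩ := Nat.exists_eq_two_pow_mul_odd he0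
  have hj : j ≠ 0 := by
    rintro rfl
    exact Nat.not_even_iff_odd.2 (by simpa using hm) he
  refine ⟨m, hm, Nat.mul_le_mul_right m (Nat.le_self_pow hj 2), ?_⟩
  rw [mul_comm, pow_mul]
  exact pow_expChar_pow_sub_mem_artinSchreierRange _ _

end ArtinSchreier

section ArtinSchreierPolynomial

variable {R : Type*} [CommRing R] {p : ℕ}

theorem derivative_sub_pow_char [CharP R p] (P : R[X]) :
    derivative (P - P ^ p) = derivative P := by
  simp [derivative_pow]

theorem natDegree_sub_pow [NoZeroDivisors R] (hp : 1 < p) (P : R[X]) :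
    (P - P ^ p).natDegree = p * P.natDegree := by
  rcases Nat.eq_zero_or_pos P.natDegree with h0 | hpos
  · rw [h0, mul_zero, ← Nat.le_zero]
    refine (natDegree_sub_le _ _).trans ?_
    simp [natDegree_pow, h0]
  · rw [natDegree_sub_eq_right_of_natDegree_lt (by rw [natDegree_pow]; exact lt_mul_left hpos hp),
      natDegree_pow]

theorem mul_natDegree_derivative_lt_of_eq_sub_pow [NoZeroDivisors R] [CharP R p] (hp : 1 < p)
    {D P : R[X]} (hD : D = P - P ^ p) (hD' : derivative D ≠ 0) :
    p * (derivative D).natDegree < D.natDegree := by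
  subst hD
  rw [derivative_sub_pow_char] at hD' ⊢
  rw [natDegree_sub_pow hp]
  have hP : P.natDegree ≠ 0 := fun h => hD' (derivative_of_natDegree_zero h)
  exact Nat.mul_lt_mul_of_pos_left (natDegree_derivative_lt hP) (by omega)

theorem natDegree_comp_X_add_C_sub_le [Nontrivial R] (f : R[X]) (y : R) :
    (f.comp (X + C y) - f - C (f.eval y)).natDegree ≤ f.natDegree := by
  refine (natDegree_sub_le _ _).trans
    (max_le ((natDegree_sub_le _ _).trans (max_le ?_ le_rfl)) (by simp))
  exact natDegree_comp_le.trans (by rw [natDegree_X_add_C, mul_one])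

theorem derivative_comp_X_add_C_sub (f : R[X]) (y : R) :
    derivative (f.comp (X + C y) - f - C (f.eval y)) =
      (derivative f).comp (X + C y) - derivative f := by
  simp [derivative_comp]

theorem X_add_X_pow_comp_X_add_C [ExpChar R p] (n : ℕ) (y : R) :
    (X + X ^ p ^ n : R[X]).comp (X + C y) = X + X ^ p ^ n + C (y + y ^ p ^ n) := by
  rw [add_comp, X_comp, X_pow_comp, add_pow_expChar_pow, ← C_pow, C_add]
  ring

theorem derivative_X_add_X_pow [CharP R p] {n : ℕ} (hn : n ≠ 0) :
    derivative (X + X ^ p ^ n : R[X]) = 1 := by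
  simp [derivative_X_pow, CharP.cast_eq_zero, hn]

end ArtinSchreierPolynomial

theorem ncard_setOf_pow_eq_self_s10 {k : Type*} [Field k] [IsAlgClosed k] {p q : ℕ} [CharP k p]
    (hpq : p ∣ q) (hq : 1 < q) : {y : k | y ^ q = y}.ncard = q := by
  classical
  have hroots : {y : k | y ^ q = y} = (X ^ q - X : k[X]).rootSet k := by
    ext y
    simp [mem_rootSet, FiniteField.X_pow_card_sub_X_ne_zero k hq, sub_eq_zero]
  rw [hroots, ← Nat.card_coe_set_eq, Nat.card_eq_fintype_card,
    card_rootSet_eq_natDegree (galois_poly_separable p q hpq) (IsAlgClosed.splits _),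
    FiniteField.X_pow_card_sub_X_natDegree_eq k hq]

section CharTwo

variable {R : Type*} [CommRing R] [CharP R 2]

theorem X_add_X_pow_sq (n : ℕ) :
    (X + X ^ 2 ^ n : R[X]) ^ 2 = X ^ 2 + X ^ (2 * 2 ^ n) := by
  rw [CharTwo.add_sq, ← pow_mul, mul_comm]

theorem X_add_X_pow_pow_four (n : ℕ) :
    (X + X ^ 2 ^ n : R[X]) ^ 4 = X ^ 4 + X ^ (4 * 2 ^ n) := by
  rw [show 4 = 2 * 2 by rfl, pow_mul, X_add_X_pow_sq, CharTwo.add_sq, ← pow_mul, ← pow_mul]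
  ring_nf

theorem X_add_X_pow_pow_seven (n : ℕ) :
    (X + X ^ 2 ^ n : R[X]) ^ 7 = X ^ 7 + X ^ (2 ^ n + 6) + X ^ (2 * 2 ^ n + 5)
      + X ^ (3 * 2 ^ n + 4) + X ^ (4 * 2 ^ n + 3) + X ^ (5 * 2 ^ n + 2) + X ^ (6 * 2 ^ n + 1)
      + X ^ (7 * 2 ^ n) := by
  rw [show 7 = 4 + 2 + 1 by rfl, pow_add, pow_add, X_add_X_pow_pow_four, X_add_X_pow_sq, pow_one]
  ring

theorem derivative_X_add_X_pow_pow_seven {n : ℕ} (hn : n ≠ 0) :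
    derivative ((X + X ^ 2 ^ n : R[X]) ^ 7) = (X + X ^ 2 ^ n) ^ 6 := by
  rw [derivative_pow, derivative_X_add_X_pow hn]
  have h7 : (7 : R) = 1 := by linear_combination 3 * CharTwo.two_eq_zero (R := R)
  simp [h7]

theorem derivative_comp_X_add_C_sub_X_add_X_pow_pow_seven {n : ℕ} (hn : n ≠ 0) (y : R) :
    derivative (((X + X ^ 2 ^ n : R[X]) ^ 7).comp (X + C y) - (X + X ^ 2 ^ n) ^ 7
        - C (((X + X ^ 2 ^ n : R[X]) ^ 7).eval y)) =
      C ((y + y ^ 2 ^ n) ^ 2) * (X ^ 4 + X ^ (4 * 2 ^ n))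
        + C ((y + y ^ 2 ^ n) ^ 4) * (X ^ 2 + X ^ (2 * 2 ^ n)) + C ((y + y ^ 2 ^ n) ^ 6) := by
  rw [derivative_comp_X_add_C_sub, derivative_X_add_X_pow_pow_seven hn, pow_comp,
    X_add_X_pow_comp_X_add_C, ← X_add_X_pow_sq, ← X_add_X_pow_pow_four]
  set u : R[X] := X + X ^ 2 ^ n
  set c : R[X] := C (y + y ^ 2 ^ n)
  simp only [C_pow]
  linear_combination (3 * u ^ 5 * c + 7 * u ^ 4 * c ^ 2 + 10 * u ^ 3 * c ^ 3
    + 7 * u ^ 2 * c ^ 4 + 3 * u * c ^ 5) * (CharTwo.two_eq_zero : (2 : R[X]) = 0)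

theorem exists_reduced_X_add_X_pow_pow_seven [Nontrivial R] {n : ℕ} (hn : n ≠ 0) :
    ∃ g : R[X], g - (X + X ^ 2 ^ n) ^ 7 ∈ artinSchreierRange 2 ∧
      (∀ i, 2 ∣ i → i ≠ 0 → g.coeff i = 0) ∧ g.natDegree = 6 * 2 ^ n + 1 := by
  set q := 2 ^ n
  have hq2 : 2 ≤ q := Nat.le_self_pow hn 2
  obtain ⟨t, ht⟩ : 2 ∣ q := dvd_pow_self 2 hn
  obtain ⟨m₁, ⟨r₁, rfl⟩, hle₁, hmem₁⟩ := exists_odd_pow_sub_mem_artinSchreierRange (X : R[X])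
    (e := q + 6) (by rw [Nat.even_iff]; omega) (by omega)
  obtain ⟨m₂, ⟨r₂, rfl⟩, hle₂, hmem₂⟩ := exists_odd_pow_sub_mem_artinSchreierRange (X : R[X])
    (e := 3 * q + 4) (by rw [Nat.even_iff]; omega) (by omega)
  obtain ⟨m₃, ⟨r₃, rfl⟩, hle₃, hmem₃⟩ := exists_odd_pow_sub_mem_artinSchreierRange (X : R[X])
    (e := 5 * q + 2) (by rw [Nat.even_iff]; omega) (by omega)
  obtain ⟨m₄, ⟨r₄, rfl⟩, hle₄, hmem₄⟩ := exists_odd_pow_sub_mem_artinSchreierRange (X : R[X])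
    (e := 7 * q) (by rw [Nat.even_iff]; omega) (by omega)
  refine ⟨X ^ 7 + X ^ (2 * q + 5) + X ^ (4 * q + 3) + X ^ (6 * q + 1)
    + X ^ (2 * r₁ + 1) + X ^ (2 * r₂ + 1) + X ^ (2 * r₃ + 1) + X ^ (2 * r₄ + 1), ?_, ?_, ?_⟩
  · convert neg_mem (add_mem (add_mem (add_mem hmem₁ hmem₂) hmem₃) hmem₄) using 1
    rw [X_add_X_pow_pow_seven]
    ring
  · intro i hi hi0
    simp (disch := omega) only [coeff_add, coeff_X_pow, if_neg]
    simp
  · refine natDegree_eq_of_le_of_coeff_ne_zero ?_ ?_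
    · rw [natDegree_le_iff_coeff_eq_zero]
      intro N hN
      simp (disch := omega) only [coeff_add, coeff_X_pow, if_neg]
      simp
    · simp (disch := omega) only [coeff_add, coeff_X_pow, if_neg]
      simp

end CharTwo

section CharTwoField

variable {k : Type*} [Field k] [CharP k 2]

theorem mem_Sf_X_add_X_pow_pow_seven_iff {n : ℕ} (hn : n ≠ 0) {y : k} :
    y ∈ Sf 2 ((X + X ^ 2 ^ n : k[X]) ^ 7) ↔ y ^ 2 ^ n = y := by
  have hq : 2 ≤ 2 ^ n := Nat.le_self_pow hn 2
  constructor
  · rintro ⟨P, -, hP⟩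
    by_contra hy
    have ha : (y + y ^ 2 ^ n) ^ 2 ≠ 0 :=
      pow_ne_zero 2 fun h => hy (CharTwo.add_eq_zero.1 h).symm
    have hder := derivative_comp_X_add_C_sub_X_add_X_pow_pow_seven hn y
    set D := ((X + X ^ 2 ^ n : k[X]) ^ 7).comp (X + C y) - (X + X ^ 2 ^ n) ^ 7
      - C (((X + X ^ 2 ^ n : k[X]) ^ 7).eval y)
    have hcoeff : (derivative D).coeff (4 * 2 ^ n) = (y + y ^ 2 ^ n) ^ 2 := by
      rw [hder]
      simp only [coeff_add, coeff_C_mul, coeff_X_pow, coeff_C]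
      simp [show 4 * 2 ^ n ≠ 4 by omega, show 4 * 2 ^ n ≠ 2 by omega,
        show 4 * 2 ^ n ≠ 2 * 2 ^ n by omega, show 4 * 2 ^ n ≠ 0 by omega]
    have hlow := le_natDegree_of_ne_zero (hcoeff ▸ ha)
    have hu : (X + X ^ 2 ^ n : k[X]).natDegree ≤ 2 ^ n :=
      (natDegree_add_le _ _).trans (by simp [Nat.one_le_two_pow])
    have hup : D.natDegree ≤ 7 * 2 ^ n :=
      (natDegree_comp_X_add_C_sub_le _ y).trans (natDegree_pow_le_of_le 7 hu)
    have hlt := mul_natDegree_derivative_lt_of_eq_sub_pow one_lt_two hP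
      (fun h => ha (by rw [← hcoeff, h, coeff_zero]))
    omega
  · intro hy
    have hu : (X + X ^ 2 ^ n : k[X]).comp (X + C y) = X + X ^ 2 ^ n := by
      rw [X_add_X_pow_comp_X_add_C, hy, CharTwo.add_self_eq_zero, C_0, add_zero]
    refine ⟨0, coeff_zero 0, ?_⟩
    simp [pow_comp, hu, hy, CharTwo.add_self_eq_zero]

end CharTwoField

/-- Lemma 4.13 i), optimality for `p = 2`: for `f = (X + X^{2^{s-1}})^7` one has
`S(f) = 𝔽_{2^{s-1}} = {y : y^{2^{s-1}} = y}`, so `|S(f)| = 2^{s-1}`; the reduced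
representative of `f` (a 2-power-free polynomial congruent to `f` mod `(F - Id)k[X]`)
has conductor `1 + 3·2^s`, so the bound `|G_{∞,1}| ≤ 2^s` of Lemma 4.13 is attained. -/
theorem Sf_optimal_char_two (k : Type*) [Field k] [IsAlgClosed k] [CharP k 2]
    (s : ℕ) (hs : 2 ≤ s) (f : k[X])
    (hf : f = (X + X ^ 2 ^ (s - 1)) ^ 7) :
    Sf 2 f = {y : k | y ^ 2 ^ (s - 1) = y} ∧ (Sf 2 f).ncard = 2 ^ (s - 1) ∧
    ∃ g Q : k[X], g = f + Q ^ 2 - Q ∧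
      (∀ i : ℕ, 2 ∣ i → i ≠ 0 → g.coeff i = 0) ∧
      g.natDegree = 1 + 3 * 2 ^ s := by
  subst hf
  have hn : s - 1 ≠ 0 := by omega
  have hS : Sf 2 ((X + X ^ 2 ^ (s - 1) : k[X]) ^ 7) = {y | y ^ 2 ^ (s - 1) = y} :=
    Set.ext fun _ => mem_Sf_X_add_X_pow_pow_seven_iff hn
  refine ⟨hS, hS ▸ ncard_setOf_pow_eq_self_s10 (dvd_pow_self 2 hn) (Nat.one_lt_two_pow hn), ?_⟩
  obtain ⟨g, hg, hcoeff, hdeg⟩ := exists_reduced_X_add_X_pow_pow_seven (R := k) hn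
  obtain ⟨Q, hQ⟩ := mem_artinSchreierRange.1 hg
  refine ⟨g, Q, by rw [add_sub_assoc, hQ]; ring, hcoeff, ?_⟩
  rw [hdeg, show 2 ^ s = 2 * 2 ^ (s - 1) by rw [← pow_succ', Nat.sub_add_cancel (by omega)]]
  ring
end

section
/- (Proposition 4.9, modifications of type 1.) Let f ∈ k[X] with f(0) = 0 and let T ∈ k[X] be an additive polynomial. Then {y ∈ k : T(y) ∈ S(f)} ⊆ S(f ∘ T), where (f ∘ T)(X) = f(T(X)). Moreover, for y, z ∈ k with T(y), T(z) ∈ S(f), the commutation constants agree: ε_{f∘T}(y, z) = ε_f(T(y), T(z)), where for u, v ∈ S(g) the constant ε_g(u,v) is defined as the (constant) polynomial P_u(X) + P_v(X+u) − P_v(X) − P_u(X+v) built from the unique witnesses P_u, P_v of u, v ∈ S(g). -/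
open Polynomial

namespace Polynomial

variable {R : Type*}

section CommRing

variable [CommRing R]

noncomputable def shiftDefect (f : R[X]) (u : R) : R[X] :=
  f.comp (X + C u) - f - C (f.eval u)

/-- The paper's `ε(u, v)`, for witnesses `P` of `u` and `Q` of `v`. -/
noncomputable def commConst (P Q : R[X]) (u v : R) : R[X] :=
  P + Q.comp (X + C u) - Q - P.comp (X + C v)

theorem comp_X_add_C_comp_X_add_C (f : R[X]) (u v : R) :
    (f.comp (X + C u)).comp (X + C v) = f.comp (X + C (u + v)) := by
  rw [comp_assoc, add_comp, X_comp, C_comp, C_add]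
  ring_nf

theorem shiftDefect_comp_X_add_C_sub (f : R[X]) (u v : R) :
    (shiftDefect f v).comp (X + C u) - shiftDefect f v
      = (shiftDefect f u).comp (X + C v) - shiftDefect f u := by
  simp only [shiftDefect, sub_comp, C_comp, comp_X_add_C_comp_X_add_C, add_comm u v]
  ring

theorem commConst_shiftDefect (f : R[X]) (u v : R) :
    commConst (shiftDefect f u) (shiftDefect f v) u v = 0 := by
  rw [commConst]
  linear_combination shiftDefect_comp_X_add_C_sub f u v

theorem commConst_sub_pow (p : ℕ) [Fact p.Prime] [CharP R p] (P Q : R[X]) (u v : R) :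
    commConst (P - P ^ p) (Q - Q ^ p) u v = commConst P Q u v - commConst P Q u v ^ p := by
  simp only [commConst, sub_comp, pow_comp, sub_pow_char, add_pow_char]
  ring

/-- `T(X + Y) = T(X) + T(Y)` in `R[X][Y]`, where `X` is the constant `C X`. -/
def IsAdditive (T : R[X]) : Prop :=
  (T.map C).comp ((C X : R[X][X]) + X) = C T + T.map C

namespace IsAdditive

variable {T : R[X]}

theorem comp_X_add_C (hT : T.IsAdditive)
    (y : R) : T.comp (X + C y) = T + C (T.eval y) := by
  have h := congrArg (eval (C y)) hT
  simp only [eval_comp, eval_add, eval_C, eval_X, eval_map] at h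
  rwa [← comp.eq_1, ← comp.eq_1, comp_C] at h

theorem eval_zero (hT : T.IsAdditive) :
    T.eval 0 = 0 := by
  have h := hT.comp_X_add_C 0
  rw [map_zero, add_zero, comp_X, left_eq_add, C_eq_zero] at h
  exact h

theorem coeff_zero_comp (hT : T.IsAdditive)
    {P : R[X]} (hP : P.coeff 0 = 0) : (P.comp T).coeff 0 = 0 := by
  rw [coeff_zero_eq_eval_zero, eval_comp, hT.eval_zero, ← coeff_zero_eq_eval_zero, hP]

theorem comp_comp_X_add_C
    (hT : T.IsAdditive) (P : R[X]) (y : R) :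
    (P.comp T).comp (X + C y) = (P.comp (X + C (T.eval y))).comp T := by
  rw [comp_assoc, comp_assoc, hT.comp_X_add_C, add_comp, X_comp, C_comp]

theorem shiftDefect_comp
    (hT : T.IsAdditive) (f : R[X]) (y : R) :
    shiftDefect (f.comp T) y = (shiftDefect f (T.eval y)).comp T := by
  rw [shiftDefect, shiftDefect, hT.comp_comp_X_add_C, eval_comp, sub_comp, sub_comp,
    C_comp]

theorem commConst_comp
    (hT : T.IsAdditive) (P Q : R[X]) (y z : R) :
    commConst (P.comp T) (Q.comp T) y z = (commConst P Q (T.eval y) (T.eval z)).comp T := by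
  rw [commConst, commConst, hT.comp_comp_X_add_C, hT.comp_comp_X_add_C,
    sub_comp, sub_comp, add_comp]

end IsAdditive

end CommRing

section NoZeroDivisors

variable {p : ℕ}

theorem eq_C_of_eq_pow [Semiring R] [NoZeroDivisors R] (hp : 1 < p) {E : R[X]} (h : E = E ^ p) : E = C (E.coeff 0) := by
  have hdeg : E.natDegree = p * E.natDegree := by
    conv_lhs => rw [h]
    exact natDegree_pow E p
  exact eq_C_of_natDegree_eq_zero (by nlinarith)

variable [CommRing R] [NoZeroDivisors R] [Fact p.Prime] [CharP R p]

theorem eq_of_sub_pow_eq_sub_pow {P Q : R[X]} (hP : P.coeff 0 = 0) (hQ : Q.coeff 0 = 0)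
    (h : P - P ^ p = Q - Q ^ p) : P = Q := by
  have hfix : P - Q = (P - Q) ^ p := by
    rw [sub_pow_char]
    linear_combination h
  have hconst := eq_C_of_eq_pow (Fact.out : p.Prime).one_lt hfix
  rw [coeff_sub, hP, hQ, sub_zero, map_zero, sub_eq_zero] at hconst
  exact hconst

theorem commConst_eq_C {f P Q : R[X]} {u v : R} (hP : shiftDefect f u = P - P ^ p)
    (hQ : shiftDefect f v = Q - Q ^ p) :
    commConst P Q u v = C ((commConst P Q u v).coeff 0) := by
  refine eq_C_of_eq_pow (Fact.out : p.Prime).one_lt (sub_eq_zero.mp ?_)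
  rw [← commConst_sub_pow, ← hP, ← hQ, commConst_shiftDefect]

end NoZeroDivisors

end Polynomial

theorem Sf_modification_type_one_general (p : ℕ) (hp : p.Prime)
    (k : Type*) [Field k] [CharP k p]
    (f T : k[X])
    (hTadd : (T.map C).comp ((C X : Polynomial k[X]) + X) = C T + T.map C) :
    (∀ y : k, T.eval y ∈ Sf p f → y ∈ Sf p (f.comp T)) ∧
    (∀ (y z : k) (Py Pz Qy Qz : k[X]),
      Py.coeff 0 = 0 →
      f.comp (X + C (T.eval y)) - f - C (f.eval (T.eval y)) = Py - Py ^ p →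
      Pz.coeff 0 = 0 →
      f.comp (X + C (T.eval z)) - f - C (f.eval (T.eval z)) = Pz - Pz ^ p →
      Qy.coeff 0 = 0 →
      (f.comp T).comp (X + C y) - f.comp T - C ((f.comp T).eval y) = Qy - Qy ^ p →
      Qz.coeff 0 = 0 →
      (f.comp T).comp (X + C z) - f.comp T - C ((f.comp T).eval z) = Qz - Qz ^ p →
      Qy + Qz.comp (X + C y) - Qz - Qy.comp (X + C z)
        = Py + Pz.comp (X + C (T.eval y)) - Pz - Py.comp (X + C (T.eval z))) := by
  have : Fact p.Prime := ⟨hp⟩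
  have hT : T.IsAdditive := hTadd
  have transport (y : k) (P : k[X]) (hP0 : P.coeff 0 = 0)
      (hP : shiftDefect f (T.eval y) = P - P ^ p) :
      (P.comp T).coeff 0 = 0 ∧ shiftDefect (f.comp T) y = P.comp T - P.comp T ^ p :=
    ⟨hT.coeff_zero_comp hP0,
      by rw [hT.shiftDefect_comp, hP, sub_comp, pow_comp]⟩
  refine ⟨fun y ⟨P, hP0, hP⟩ => ⟨P.comp T, transport y P hP0 hP⟩, ?_⟩
  intro y z Py Pz Qy Qz hPy0 hPy hPz0 hPz hQy0 hQy hQz0 hQz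
  obtain ⟨hy0, hy⟩ := transport y Py hPy0 hPy
  obtain ⟨hz0, hz⟩ := transport z Pz hPz0 hPz
  obtain rfl := eq_of_sub_pow_eq_sub_pow hQy0 hy0 (hQy.symm.trans hy)
  obtain rfl := eq_of_sub_pow_eq_sub_pow hQz0 hz0 (hQz.symm.trans hz)
  change commConst (Py.comp T) (Pz.comp T) y z = commConst Py Pz (T.eval y) (T.eval z)
  rw [hT.commConst_comp, commConst_eq_C hPy hPz, C_comp]

/-- Proposition 4.9 (modifications of type 1): for an additive polynomial `T`,
`{y : T(y) ∈ S(f)} ⊆ S(f ∘ T)`, and the commutation constants agree: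
`ε_{f∘T}(y,z) = ε_f(T(y),T(z))`, where `ε` is built from the (unique) witnesses. -/
theorem Sf_modification_type_one (p : ℕ) (hp : p.Prime)
    (k : Type*) [Field k] [IsAlgClosed k] [CharP k p]
    (f T : k[X]) (hf0 : f.coeff 0 = 0)
    (hTadd : (T.map C).comp ((C X : Polynomial k[X]) + X) = C T + T.map C) :
    (∀ y : k, T.eval y ∈ Sf p f → y ∈ Sf p (f.comp T)) ∧
    (∀ (y z : k) (Py Pz Qy Qz : k[X]),
      Py.coeff 0 = 0 →
      f.comp (X + C (T.eval y)) - f - C (f.eval (T.eval y)) = Py - Py ^ p →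
      Pz.coeff 0 = 0 →
      f.comp (X + C (T.eval z)) - f - C (f.eval (T.eval z)) = Pz - Pz ^ p →
      Qy.coeff 0 = 0 →
      (f.comp T).comp (X + C y) - f.comp T - C ((f.comp T).eval y) = Qy - Qy ^ p →
      Qz.coeff 0 = 0 →
      (f.comp T).comp (X + C z) - f.comp T - C ((f.comp T).eval z) = Qz - Qz ^ p →
      Qy + Qz.comp (X + C y) - Qz - Qy.comp (X + C z)
        = Py + Pz.comp (X + C (T.eval y)) - Pz - Py.comp (X + C (T.eval z))) :=
  Sf_modification_type_one_general p hp k f T hTadd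
end

section
/- (Corollary 3.5, the commutation rule is a prime-field constant.) Let f ∈ k[X] with f(0) = 0 and let y, z ∈ S(f) with witnesses P_y, P_z ∈ k[X] (so P_y(0) = 0 and f(X+y) − f(X) − f(y) = P_y(X) − P_y(X)^p, and similarly for z). Then the polynomial ε_f(y,z) := P_y(X) + P_z(X+y) − P_z(X) − P_y(X+z) is a constant c ∈ k satisfying c^p = c, i.e. c lies in the prime field 𝔽_p ⊆ k. (This constant realizes the commutator [σ_y, σ_z] = ρ^{ε_f(y,z)} in G_{∞,1}(f).) -/
open Polynomial

/-- Corollary 3.5 (the commutation rule is a prime-field constant): for `y, z ∈ S(f)`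
with witnesses `P_y, P_z`, the polynomial
`ε_f(y,z) = P_y(X) + P_z(X+y) - P_z(X) - P_y(X+z)` is a constant `c` with `c^p = c`. -/
theorem epsilon_is_prime_field_constant (p : ℕ) (hp : p.Prime)
    (k : Type*) [Field k] [IsAlgClosed k] [CharP k p]
    (f : k[X]) (hf0 : f.coeff 0 = 0) (y z : k) (Py Pz : k[X])
    (hPy0 : Py.coeff 0 = 0)
    (hPy : f.comp (X + C y) - f - C (f.eval y) = Py - Py ^ p)
    (hPz0 : Pz.coeff 0 = 0)
    (hPz : f.comp (X + C z) - f - C (f.eval z) = Pz - Pz ^ p) :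
    ∃ c : k, c ^ p = c ∧
      Py + Pz.comp (X + C y) - Pz - Py.comp (X + C z) = C c := by
  haveI : Fact p.Prime := ⟨hp⟩
  set E : k[X] := Py + Pz.comp (X + C y) - Pz - Py.comp (X + C z) with hE
  have h1 := congrArg (fun q : k[X] => q.comp (X + C z)) hPy
  have h2 := congrArg (fun q : k[X] => q.comp (X + C y)) hPz
  simp only [sub_comp, add_comp, pow_comp, X_comp, C_comp, comp_assoc] at h1 h2
  have hc : (X + C z + C y : k[X]) = X + C y + C z := by ring
  rw [hc] at h1
  have hEp : E ^ p = Py ^ p + (Pz.comp (X + C y)) ^ p - Pz ^ p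
      - (Py.comp (X + C z)) ^ p := by
    rw [hE, sub_pow_char, sub_pow_char, add_pow_char]
  have key : E = E ^ p := by
    rw [hEp, hE]
    linear_combination h1 + hPz - h2 - hPy
  have hdeg : E.natDegree = 0 := by
    have h := key
    have : E.natDegree = p * E.natDegree := by
      conv_lhs => rw [key]
      rw [natDegree_pow]
    nlinarith [hp.two_le, E.natDegree.zero_le]
  refine ⟨E.coeff 0, ?_, ?_⟩
  · have hEC : E = C (E.coeff 0) := eq_C_of_natDegree_eq_zero hdeg
    have := key
    rw [hEC, ← C_pow] at this
    exact (C_injective this).symm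
  · exact eq_C_of_natDegree_eq_zero hdeg
end

section
/- (Corollary 3.4, existence of the automorphisms σ_{a,b,c}.) Let k be a field of characteristic p > 0, f ∈ k[X], and let R := k[X][W]/(W^p − W − f(X)) (the quotient of a polynomial ring in W over k[X] by the Artin–Schreier relation), with x, w ∈ R the images of X and W. Let a, b, c, d ∈ k with a ≠ 0, c ≠ 0, c^p = c, d^p = d, and suppose P ∈ k[X] satisfies c·f(X) − f(aX+b) = P(X) − P(X)^p. Then there exists a k-algebra automorphism σ of R with σ(x) = a·x + b and σ(w) = c·w + P(x) + d. (Taking (a,b,c,P,d) = (1,0,1,0,1) yields the Artin–Schreier automorphism ρ.) -/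
open Polynomial

section AS

variable {p : ℕ} {k : Type*} [Field k] [CharP k p]

/-- Two `k`-algebra homs out of the Artin–Schreier algebra agree if they agree
on the images of `X` and of the root. -/
theorem AS_hom_ext {q : Polynomial k[X]} {S : Type*} [CommRing S] [Algebra k S]
    (φ ψ : AdjoinRoot q →ₐ[k] S)
    (hx : φ (AdjoinRoot.of q X) = ψ (AdjoinRoot.of q X))
    (hr : φ (AdjoinRoot.root q) = ψ (AdjoinRoot.root q)) : φ = ψ := by
  have hof : ∀ g : k[X], φ (AdjoinRoot.of q g) = ψ (AdjoinRoot.of q g) := by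
    intro g
    have key : AdjoinRoot.of q g = aeval (AdjoinRoot.of q X) g := by
      rw [← AdjoinRoot.algebraMap_eq, aeval_algebraMap_apply, aeval_X_left_apply]
    rw [key, ← aeval_algHom_apply, ← aeval_algHom_apply, hx]
  apply AlgHom.ext
  intro z
  induction z using AdjoinRoot.induction_on with
  | ih g =>
    induction g using Polynomial.induction_on' with
    | add u v hu hv => rw [map_add, map_add, map_add, hu, hv]
    | monomial n t =>
      rw [← C_mul_X_pow_eq_monomial, map_mul, map_pow, AdjoinRoot.mk_X]
      have hC : AdjoinRoot.mk q (C t) = AdjoinRoot.of q t := rfl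
      rw [hC, map_mul, map_mul, map_pow, map_pow, hof, hr]

/-- Existence of the algebra endomorphism determined by the data `(a,b,c,P,d)`. -/
theorem AS_hom (hp : p.Prime) (f : k[X]) (a b c d : k)
    (hcp : c ^ p = c) (hdp : d ^ p = d)
    (P : k[X]) (hP : C c * f - f.comp (C a * X + C b) = P - P ^ p) :
    ∃ σ : AdjoinRoot ((X : Polynomial k[X]) ^ p - X - C f) →ₐ[k]
          AdjoinRoot ((X : Polynomial k[X]) ^ p - X - C f),
      σ (AdjoinRoot.of _ X) =
          algebraMap k _ a * AdjoinRoot.of _ X + algebraMap k _ b ∧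
      σ (AdjoinRoot.root _) =
          algebraMap k _ c * AdjoinRoot.root _
            + aeval (AdjoinRoot.of ((X : Polynomial k[X]) ^ p - X - C f) X) P
            + algebraMap k _ d := by
  haveI : Fact p.Prime := ⟨hp⟩
  set q : Polynomial k[X] := (X : Polynomial k[X]) ^ p - X - C f with hq
  haveI : Nontrivial (AdjoinRoot q) := by
    refine AdjoinRoot.nontrivial q ?_
    have hdeg : q.degree = p := by
      rw [hq, sub_sub]
      rw [degree_sub_eq_left_of_degree_lt, degree_X_pow]
      rw [degree_X_pow]
      refine lt_of_le_of_lt (degree_add_le _ _) (max_lt ?_ ?_)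
      · rw [degree_X]; exact_mod_cast hp.one_lt
      · exact lt_of_le_of_lt (degree_C_le) (by exact_mod_cast hp.pos)
    rw [hdeg]
    exact_mod_cast hp.ne_zero
  haveI : CharP (AdjoinRoot q) p :=
    charP_of_injective_algebraMap (algebraMap k (AdjoinRoot q)).injective p
  set R := AdjoinRoot q
  set x : R := AdjoinRoot.of q X with hx
  set r : R := AdjoinRoot.root q with hrdef
  set A : R := algebraMap k R a * x + algebraMap k R b with hA
  set w0 : R := algebraMap k R c * r + aeval x P + algebraMap k R d with hw0
  -- auxiliary facts
  have hofeq : ∀ g : k[X], AdjoinRoot.of q g = aeval x g := by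
    intro g
    rw [hx, ← AdjoinRoot.algebraMap_eq, aeval_algebraMap_apply, aeval_X_left_apply]
  have hroot : r ^ p - r - aeval x f = 0 := by
    have h0 := AdjoinRoot.eval₂_root q
    rw [hq] at h0
    simpa [eval₂_sub, ← hofeq] using h0
  -- the key relation
  have hkey : q.eval₂ ((aeval A : k[X] →ₐ[k] R) : k[X] →+* R) w0 = 0 := by
    have hrp : r ^ p = r + aeval x f := by linear_combination hroot
    have hcp' : (algebraMap k R c) ^ p = algebraMap k R c := by rw [← map_pow, hcp]
    have hdp' : (algebraMap k R d) ^ p = algebraMap k R d := by rw [← map_pow, hdp]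
    have hfrob : w0 ^ p = algebraMap k R c * (r + aeval x f) + (aeval x P) ^ p
        + algebraMap k R d := by
      rw [hw0, add_pow_char, add_pow_char, mul_pow, hcp', hdp', hrp]
    have hmain := congrArg (aeval x) hP
    simp only [map_sub, map_mul, aeval_C, map_add, aeval_X, map_pow, aeval_comp] at hmain
    rw [← hA] at hmain
    show eval₂ ((aeval A : k[X] →ₐ[k] R) : k[X] →+* R) w0
      ((X : Polynomial k[X]) ^ p - X - C f) = 0
    simp only [eval₂_sub, eval₂_pow, eval₂_X, eval₂_C, RingHom.coe_coe]
    rw [hfrob, hw0]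
    linear_combination hmain
  -- build the algebra hom
  refine ⟨{ toRingHom := AdjoinRoot.lift _ w0 hkey, commutes' := ?_ }, ?_, ?_⟩
  · intro t
    have h1 : algebraMap k R t = AdjoinRoot.of q (C t) := by
      rw [AdjoinRoot.algebraMap_eq']; rfl
    show AdjoinRoot.lift _ w0 hkey (algebraMap k R t) = algebraMap k R t
    rw [h1, AdjoinRoot.lift_of, RingHom.coe_coe, aeval_C, ← h1]
  · show AdjoinRoot.lift _ w0 hkey x = _
    rw [hx, AdjoinRoot.lift_of, RingHom.coe_coe, aeval_X]
  · show AdjoinRoot.lift _ w0 hkey r = _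
    rw [hrdef, AdjoinRoot.lift_root]

end AS

/-- Corollary 3.4 (existence of the automorphisms `σ_{a,b,c}`): on the Artin–Schreier
algebra `R = k[X][W]/(W^p - W - f(X))`, given `a ≠ 0`, `c ∈ 𝔽_p^×`, `d ∈ 𝔽_p` and
`P ∈ k[X]` with `c·f(X) - f(aX+b) = P - P^p`, there is a `k`-algebra automorphism `σ`
with `σ(x) = a·x + b` and `σ(w) = c·w + P(x) + d`. -/
theorem exists_automorphism_sigma (p : ℕ) (hp : p.Prime)
    (k : Type*) [Field k] [CharP k p]
    (f : k[X]) (a b c d : k) (ha : a ≠ 0) (hc : c ≠ 0)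
    (hcp : c ^ p = c) (hdp : d ^ p = d)
    (P : k[X]) (hP : C c * f - f.comp (C a * X + C b) = P - P ^ p) :
    ∃ σ : AdjoinRoot ((X : Polynomial k[X]) ^ p - X - C f) ≃ₐ[k]
          AdjoinRoot ((X : Polynomial k[X]) ^ p - X - C f),
      σ (AdjoinRoot.of _ X) =
          algebraMap k _ a * AdjoinRoot.of _ X + algebraMap k _ b ∧
      σ (AdjoinRoot.root _) =
          algebraMap k _ c * AdjoinRoot.root _
            + Polynomial.aeval (AdjoinRoot.of ((X : Polynomial k[X]) ^ p - X - C f) X) P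
            + algebraMap k _ d := by
  haveI : Fact p.Prime := ⟨hp⟩
  -- inverse data
  have hcpi : (c⁻¹) ^ p = c⁻¹ := by rw [inv_pow, hcp]
  have hdp2 : (-(c⁻¹ * d)) ^ p = -(c⁻¹ * d) := by
    rw [neg_pow, neg_one_pow_char, mul_pow, hcpi, hdp, neg_one_mul]
  have hgg' : (C a * X + C b).comp (C a⁻¹ * X + C (-(b * a⁻¹))) = X := by
    have h2 : a * -(b * a⁻¹) + b = 0 := by field_simp; ring
    simp only [add_comp, mul_comp, C_comp, X_comp]
    rw [mul_add, ← mul_assoc, ← C_mul, mul_inv_cancel₀ ha, C_1, one_mul,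
      add_assoc, ← C_mul, ← C_add, h2, C_0, add_zero]
  have hCc : (C c⁻¹ : k[X]) * C c = 1 := by rw [← C_mul, inv_mul_cancel₀ hc, C_1]
  have hstar : C c * (f.comp (C a⁻¹ * X + C (-(b * a⁻¹)))) - f
      = P.comp (C a⁻¹ * X + C (-(b * a⁻¹)))
        - (P.comp (C a⁻¹ * X + C (-(b * a⁻¹)))) ^ p := by
    have h := congrArg (fun t : k[X] => t.comp (C a⁻¹ * X + C (-(b * a⁻¹)))) hP
    simp only [sub_comp, mul_comp, C_comp, pow_comp, comp_assoc, hgg', comp_X] at h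
    exact h
  have hQp : (-(C c⁻¹ * P.comp (C a⁻¹ * X + C (-(b * a⁻¹))))) ^ p
      = -(C c⁻¹ * (P.comp (C a⁻¹ * X + C (-(b * a⁻¹)))) ^ p) := by
    rw [neg_pow, neg_one_pow_char, mul_pow, ← C_pow, hcpi, neg_one_mul]
  have hP2 : C c⁻¹ * f - f.comp (C a⁻¹ * X + C (-(b * a⁻¹)))
      = -(C c⁻¹ * P.comp (C a⁻¹ * X + C (-(b * a⁻¹))))
        - (-(C c⁻¹ * P.comp (C a⁻¹ * X + C (-(b * a⁻¹))))) ^ p := by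
    rw [hQp]
    linear_combination (-(C c⁻¹ : k[X])) * hstar
      + f.comp (C a⁻¹ * X + C (-(b * a⁻¹))) * hCc
  obtain ⟨σ1, hσ1x, hσ1r⟩ := AS_hom hp f a b c d hcp hdp P hP
  obtain ⟨σ2, hσ2x, hσ2r⟩ := AS_hom hp f a⁻¹ (-(b * a⁻¹)) c⁻¹ (-(c⁻¹ * d)) hcpi hdp2
    (-(C c⁻¹ * P.comp (C a⁻¹ * X + C (-(b * a⁻¹))))) hP2
  set K := AdjoinRoot ((X : Polynomial k[X]) ^ p - X - C f) with hK
  -- scalar identities in K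
  have e1 : algebraMap k K a⁻¹ * algebraMap k K a = 1 := by
    rw [← map_mul, inv_mul_cancel₀ ha, map_one]
  have e1' : algebraMap k K a * algebraMap k K a⁻¹ = 1 := by
    rw [← map_mul, mul_inv_cancel₀ ha, map_one]
  have e2 : algebraMap k K a⁻¹ * algebraMap k K b + algebraMap k K (-(b * a⁻¹)) = 0 := by
    rw [← map_mul, ← map_add, show a⁻¹ * b + -(b * a⁻¹) = 0 by ring, map_zero]
  have e2' : algebraMap k K a * algebraMap k K (-(b * a⁻¹)) + algebraMap k K b = 0 := by
    rw [← map_mul, ← map_add, show a * -(b * a⁻¹) + b = 0 by field_simp; ring, map_zero]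
  have ec1 : algebraMap k K c⁻¹ * algebraMap k K c = 1 := by
    rw [← map_mul, inv_mul_cancel₀ hc, map_one]
  have ec1' : algebraMap k K c * algebraMap k K c⁻¹ = 1 := by
    rw [← map_mul, mul_inv_cancel₀ hc, map_one]
  have ed2 : algebraMap k K c⁻¹ * algebraMap k K d + algebraMap k K (-(c⁻¹ * d)) = 0 := by
    rw [← map_mul, ← map_add, show c⁻¹ * d + -(c⁻¹ * d) = 0 by ring, map_zero]
  have ed2' : algebraMap k K c * algebraMap k K (-(c⁻¹ * d)) + algebraMap k K d = 0 := by
    rw [← map_mul, ← map_add, show c * -(c⁻¹ * d) + d = 0 by field_simp; ring, map_zero]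
  have hAx : ∀ y : K, algebraMap k K a⁻¹ * (algebraMap k K a * y + algebraMap k K b)
      + algebraMap k K (-(b * a⁻¹)) = y := by
    intro y; linear_combination y * e1 + e2
  have haQ : ∀ y : K, aeval y (-(C c⁻¹ * P.comp (C a⁻¹ * X + C (-(b * a⁻¹)))))
      = -(algebraMap k K c⁻¹
          * aeval (algebraMap k K a⁻¹ * y + algebraMap k K (-(b * a⁻¹))) P) := by
    intro y
    rw [map_neg, map_mul, aeval_C, aeval_comp, map_add, map_mul, aeval_C, aeval_X, aeval_C]
  have h12 : σ1.comp σ2 = AlgHom.id k K := by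
    refine AS_hom_ext _ _ ?_ ?_
    · rw [AlgHom.comp_apply, AlgHom.id_apply, hσ2x]
      simp only [map_add, map_mul, AlgHom.commutes]
      rw [hσ1x]
      exact hAx _
    · rw [AlgHom.comp_apply, AlgHom.id_apply, hσ2r]
      simp only [map_add, map_mul, AlgHom.commutes]
      rw [hσ1r, ← aeval_algHom_apply, hσ1x, haQ, hAx]
      linear_combination (AdjoinRoot.root _ : K) * ec1 + ed2
  have h21 : σ2.comp σ1 = AlgHom.id k K := by
    refine AS_hom_ext _ _ ?_ ?_
    · rw [AlgHom.comp_apply, AlgHom.id_apply, hσ1x]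
      simp only [map_add, map_mul, AlgHom.commutes]
      rw [hσ2x]
      linear_combination (AdjoinRoot.of _ X : K) * e1' + e2'
    · rw [AlgHom.comp_apply, AlgHom.id_apply, hσ1r]
      simp only [map_add, map_mul, AlgHom.commutes]
      rw [hσ2r, ← aeval_algHom_apply, hσ2x, haQ]
      linear_combination (AdjoinRoot.root _ - aeval (algebraMap k K a⁻¹
        * AdjoinRoot.of _ X + algebraMap k K (-(b * a⁻¹))) P : K) * ec1' + ed2'
  exact ⟨AlgEquiv.ofAlgHom σ1 σ2 h12 h21, hσ1x, hσ1r⟩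
end

section
/- (Proposition 4.20: the classes C_1 and C_2 of p-groups coincide.) Let p be a prime. Call a finite group E an extraspecial p-group if E is a p-group whose center Z(E) has order p, equals the commutator subgroup [E,E], and E/Z(E) is a nontrivial elementary abelian p-group. Then for a finite group G the following are equivalent: (i) G has a normal subgroup N of order p such that G/N is an elementary abelian p-group; (ii) there exist an extraspecial p-group E and a subgroup H of E with Z(E) ≤ H such that G is isomorphic to H. -/
/-!
If `N ≤ G` has order `p` and `G ⧸ N` is elementary abelian, then `G` is a `p`-group, so `N` is
central. Pass to `K = G × C_p`, which makes `V = K ⧸ N` nontrivial even when `N = G`, identify `N`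
with `C_p` through `ι`, and let the dual `V^∨ = Hom(V, C_p)` act on `K` by `g ↦ g * ι (χ (g N))`.
In `E = K ⋊ V^∨` the characters separate the points of `V`, so the center is exactly `N`;
`E ⧸ N ≅ V × V^∨` is elementary abelian; and `⁅χ, g⁆ = ι (χ (g N))` is a nontrivial commutator.
Hence `E` is extraspecial, and `G ≤ K ≤ E` contains `Z(E) = N`. Conversely, if `Z(E) ≤ H ≤ E`,
then `Z(E)` has order `p` and contains every commutator and `p`-th power of `H`.
-/

/-- A finite group `E` is extraspecial (for the prime `p`) if it is a `p`-group whose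
center has order `p` and equals the commutator subgroup, and `E/Z(E)` is a nontrivial
elementary abelian `p`-group. -/
def IsExtraspecial (p : ℕ) (E : Type*) [Group E] : Prop :=
  IsPGroup p E ∧
  Nat.card (Subgroup.center E) = p ∧
  Subgroup.center E = commutator E ∧
  (∀ g : E ⧸ Subgroup.center E, g ^ p = 1) ∧
  Nontrivial (E ⧸ Subgroup.center E)

open scoped commutatorElement

section

universe u

variable {G G' : Type*} [Group G] [Group G'] {p : ℕ}

theorem multiplicative_zmod_pow_eq_one (c : Multiplicative (ZMod p)) : c ^ p = 1 :=
  Multiplicative.toAdd.injective (by simp)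

/-- Witnesses `G ∈ C₁`: `N` has order `p` and `G ⧸ N` is elementary abelian. -/
structure IsC1Subgroup (p : ℕ) (N : Subgroup G) : Prop where
  card_eq : Nat.card N = p
  commutator_mem : ∀ a b : G, ⁅a, b⁆ ∈ N
  pow_mem : ∀ g : G, g ^ p ∈ N

namespace IsC1Subgroup

variable {N : Subgroup G}

theorem normal (hN : IsC1Subgroup p N) : N.Normal :=
  ⟨fun n hn g => by simpa [commutatorElement_def] using N.mul_mem (hN.commutator_mem g n) hn⟩

theorem mul_comm_quotient (hN : IsC1Subgroup p N) [N.Normal] (a b : G ⧸ N) : a * b = b * a := by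
  induction a using QuotientGroup.induction_on with | H a => ?_
  induction b using QuotientGroup.induction_on with | H b => ?_
  rw [← QuotientGroup.mk_mul, ← QuotientGroup.mk_mul, QuotientGroup.eq,
    show (a * b)⁻¹ * (b * a) = ⁅b⁻¹, a⁻¹⁆ by group]
  exact hN.commutator_mem _ _

theorem pow_quotient (hN : IsC1Subgroup p N) [N.Normal] (q : G ⧸ N) : q ^ p = 1 := by
  induction q using QuotientGroup.induction_on with | H g => ?_
  rw [← QuotientGroup.mk_pow, QuotientGroup.eq_one_iff]
  exact hN.pow_mem g

theorem isPGroup (hN : IsC1Subgroup p N) : IsPGroup p G := fun g =>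
  ⟨2, by
    have h := pow_card_eq_one' (x := (⟨g ^ p, hN.pow_mem g⟩ : N))
    rw [hN.card_eq] at h
    rw [sq, pow_mul]
    exact congrArg Subtype.val h⟩

/-- A normal subgroup of prime order in a finite `p`-group meets the center nontrivially,
hence lies in it. -/
theorem le_center [Finite G] (hp : p.Prime) (hN : IsC1Subgroup p N) : N ≤ Subgroup.center G := by
  have := Fact.mk hp
  have := hN.normal
  have : Fact (Nat.card N).Prime := ⟨hN.card_eq ▸ hp⟩
  obtain ⟨b, hb, hb1⟩ := (hN.isPGroup.of_equiv ConjAct.toConjAct)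
    |>.exists_fixed_point_of_prime_dvd_card_of_fixed_point N (hN.card_eq ▸ dvd_rfl) (a := 1)
      fun _ => smul_one _
  have hbZ : b ∈ (Subgroup.center G).subgroupOf N := by
    rw [Subgroup.mem_subgroupOf, Subgroup.mem_center_iff]
    intro g
    have := congrArg Subtype.val (hb (ConjAct.toConjAct g))
    rw [ConjAct.Subgroup.val_conj_smul, ConjAct.toConjAct_smul] at this
    exact mul_inv_eq_iff_eq_mul.1 this
  refine Subgroup.subgroupOf_eq_top.1 ((Subgroup.eq_bot_or_eq_top_of_prime_card _).resolve_left ?_)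
  intro h
  rw [h, Subgroup.mem_bot] at hbZ
  exact hb1 hbZ.symm

theorem comap (hN : IsC1Subgroup p N) (f : G' →* G) (hf : Function.Injective f)
    (hle : N ≤ f.range) : IsC1Subgroup p (N.comap f) where
  card_eq := by rw [← Subgroup.card_map_of_injective hf, Subgroup.map_comap_eq_self hle, hN.card_eq]
  commutator_mem a b := by
    rw [Subgroup.mem_comap, map_commutatorElement]
    exact hN.commutator_mem _ _
  pow_mem g := by
    rw [Subgroup.mem_comap, map_pow]
    exact hN.pow_mem _

theorem prod_bot (hN : IsC1Subgroup p N) :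
    IsC1Subgroup p (N.prod (⊥ : Subgroup (Multiplicative (ZMod p)))) where
  card_eq := by
    rw [Nat.card_congr (Subgroup.prodEquiv _ _).toEquiv, Nat.card_prod, Subgroup.card_bot, mul_one,
      hN.card_eq]
  commutator_mem a b := Subgroup.mem_prod.2 ⟨hN.commutator_mem _ _,
    Subgroup.mem_bot.2 (commutatorElement_eq_one_iff_mul_comm.2 (mul_comm _ _))⟩
  pow_mem g :=
    Subgroup.mem_prod.2 ⟨hN.pow_mem _, Subgroup.mem_bot.2 (multiplicative_zmod_pow_eq_one _)⟩

end IsC1Subgroup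

theorem IsExtraspecial.isC1Subgroup_center {E : Type*} [Group E] (hE : IsExtraspecial p E) :
    IsC1Subgroup p (Subgroup.center E) := by
  obtain ⟨-, hcard, hZ, hquot, -⟩ := hE
  refine ⟨hcard, fun a b => ?_, fun g => ?_⟩
  · exact hZ ▸ Subgroup.commutator_mem_commutator (Subgroup.mem_top a) (Subgroup.mem_top b)
  · simpa [← QuotientGroup.mk_pow, QuotientGroup.eq_one_iff] using hquot g

theorem isExtraspecial_of_card_center {E : Type*} [Group E] (hp : p.Prime)
    (hcard : Nat.card (Subgroup.center E) = p) (hcomm : ∀ a b : E, ⁅a, b⁆ ∈ Subgroup.center E)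
    (hpow : ∀ g : E, g ^ p ∈ Subgroup.center E) {a b : E} (hab : ⁅a, b⁆ ≠ 1) :
    IsExtraspecial p E := by
  have hZ : IsC1Subgroup p (Subgroup.center E) := ⟨hcard, hcomm, hpow⟩
  have hle : commutator E ≤ Subgroup.center E :=
    Subgroup.commutator_le.2 fun g _ h _ => hcomm g h
  have : Fact (Nat.card (Subgroup.center E)).Prime := ⟨hcard ▸ hp⟩
  have hge : Subgroup.center E ≤ commutator E := by
    refine Subgroup.subgroupOf_eq_top.1
      ((Subgroup.eq_bot_or_eq_top_of_prime_card _).resolve_left fun h => ?_)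
    have hmem : (⟨⁅a, b⁆, hcomm a b⟩ : Subgroup.center E) ∈ (commutator E).subgroupOf _ :=
      Subgroup.commutator_mem_commutator (Subgroup.mem_top a) (Subgroup.mem_top b)
    rw [h, Subgroup.mem_bot] at hmem
    exact hab (congrArg Subtype.val hmem)
  refine ⟨hZ.isPGroup, hcard, le_antisymm hge hle, hZ.pow_quotient, ?_⟩
  refine QuotientGroup.nontrivial_iff.2 fun h => hab ?_
  have ha : a ∈ Subgroup.center E := h ▸ Subgroup.mem_top a
  exact commutatorElement_eq_one_iff_mul_comm.2 (Subgroup.mem_center_iff.1 ha b).symm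

theorem exists_monoidHom_zmod_ne_one {V : Type*} [Group V] (hp : p.Prime)
    (hcomm : ∀ a b : V, a * b = b * a) (hpow : ∀ v : V, v ^ p = 1) {v : V} (hv : v ≠ 1) :
    ∃ χ : V →* Multiplicative (ZMod p), χ v ≠ 1 := by
  have := Fact.mk hp
  let _ : CommGroup V := { ‹Group V› with mul_comm := hcomm }
  obtain ⟨φ, hφ⟩ := not_forall.1 <| (@Module.forall_dual_apply_eq_zero_iff (Additive V) _ (ZMod p) _
    (AddCommGroup.zmodModule fun x => hpow x.toMul) _ (Additive.ofMul v)).not.2 hv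
  exact ⟨AddMonoidHom.toMultiplicativeRight φ.toAddMonoidHom, hφ⟩

namespace TwistedProduct

variable {K A : Type*} [Group K] [CommGroup A] {N : Subgroup K}

theorem mul_ι_comm (hN : N ≤ Subgroup.center K) (ι : A ≃* N) (a : A) (g : K) :
    g * ι a = ι a * g :=
  Subgroup.mem_center_iff.1 (hN (ι a).2) g

@[simp]
theorem mk_mul_ι (ι : A ≃* N) (g : K) (a : A) : ((g * ι a : K) : K ⧸ N) = g :=
  QuotientGroup.mk_mul_of_mem g (ι a).2

variable [N.Normal]

def twistAut (hN : N ≤ Subgroup.center K) (ι : A ≃* N) : (K ⧸ N →* A) →* MulAut K where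
  toFun χ :=
    { toFun g := g * ι (χ g)
      invFun g := g * ι (χ g)⁻¹
      left_inv g := by simp
      right_inv g := by simp
      map_mul' g h := by
        simp only [QuotientGroup.mk_mul, map_mul, Subgroup.coe_mul, mul_assoc]
        rw [← mul_assoc h, mul_ι_comm hN ι (χ g) h, mul_assoc] }
  map_one' := by ext; simp
  map_mul' χ ψ := by ext; simp [mul_assoc, mul_comm (χ _)]

@[simp]
theorem twistAut_apply (hN : N ≤ Subgroup.center K) (ι : A ≃* N) (χ : K ⧸ N →* A) (g : K) :
    twistAut hN ι χ g = g * ι (χ g) := rfl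

variable (hN : N ≤ Subgroup.center K) (ι : A ≃* N)

open SemidirectProduct

theorem commutator_inr_inl (χ : K ⧸ N →* A) (g : K) :
    ⁅(inr χ : K ⋊[twistAut hN ι] (K ⧸ N →* A)), inl g⁆ =
      (inl (ι (χ g) : K) : K ⋊[twistAut hN ι] (K ⧸ N →* A)) := by
  rw [commutatorElement_def, ← map_inv, ← inl_aut, ← map_inv, ← map_mul, twistAut_apply,
    mul_ι_comm hN ι _ g, mul_inv_cancel_right]

def toQuotientProd : K ⋊[twistAut hN ι] (K ⧸ N →* A) →* (K ⧸ N) × (K ⧸ N →* A) :=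
  lift ((MonoidHom.inl (K ⧸ N) (K ⧸ N →* A)).comp (QuotientGroup.mk' N))
    (MonoidHom.inr (K ⧸ N) (K ⧸ N →* A)) fun χ => by
    ext g <;> simp

@[simp]
theorem toQuotientProd_apply (x : K ⋊[twistAut hN ι] (K ⧸ N →* A)) :
    toQuotientProd hN ι x = ((x.left : K ⧸ N), x.right) := by
  simp [toQuotientProd, lift]

theorem mem_center_iff (hsep : ∀ q : K ⧸ N, q ≠ 1 → ∃ χ : K ⧸ N →* A, χ q ≠ 1)
    {x : K ⋊[twistAut hN ι] (K ⧸ N →* A)} :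
    x ∈ Subgroup.center _ ↔ x.left ∈ N ∧ x.right = 1 := by
  rw [Subgroup.mem_center_iff]
  constructor
  · intro hx
    have hleft : x.left ∈ N := by
      rw [← QuotientGroup.eq_one_iff]
      by_contra hne
      obtain ⟨χ, hχ⟩ := hsep _ hne
      exact hχ (by simpa using congrArg left (hx (inr χ)))
    refine ⟨hleft, ?_⟩
    ext g
    have := congrArg left (hx (inl g))
    simp only [mul_left, left_inl, right_inl, map_one, MulAut.one_apply, twistAut_apply] at this
    rw [Subgroup.mem_center_iff.1 (hN hleft), mul_right_inj, left_eq_mul] at this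
    simpa using this
  · rintro ⟨hleft, hright⟩ y
    ext
    · simp [hright, (QuotientGroup.eq_one_iff _).2 hleft, Subgroup.mem_center_iff.1 (hN hleft)]
    · simp [hright]

theorem center_eq_ker (hsep : ∀ q : K ⧸ N, q ≠ 1 → ∃ χ : K ⧸ N →* A, χ q ≠ 1) :
    Subgroup.center (K ⋊[twistAut hN ι] (K ⧸ N →* A)) = (toQuotientProd hN ι).ker := by
  ext x
  rw [mem_center_iff hN ι hsep, MonoidHom.mem_ker, toQuotientProd_apply, Prod.mk_eq_one,
    QuotientGroup.eq_one_iff]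

theorem center_eq_map_inl (hsep : ∀ q : K ⧸ N, q ≠ 1 → ∃ χ : K ⧸ N →* A, χ q ≠ 1) :
    Subgroup.center (K ⋊[twistAut hN ι] (K ⧸ N →* A)) = N.map inl := by
  ext x
  rw [mem_center_iff hN ι hsep, Subgroup.mem_map]
  constructor
  · rintro ⟨hleft, hright⟩
    exact ⟨x.left, hleft, SemidirectProduct.ext rfl hright.symm⟩
  · rintro ⟨n, hn, rfl⟩
    exact ⟨hn, rfl⟩

end TwistedProduct

open SemidirectProduct in
theorem IsC1Subgroup.exists_isExtraspecial_of_ne_top {K : Type u} [Group K] [Finite K]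
    (hp : p.Prime) {N : Subgroup K} (hN : IsC1Subgroup p N) (hNtop : N ≠ ⊤) :
    ∃ (E : Type u) (_ : Group E), Finite E ∧ IsExtraspecial p E ∧
      ∃ f : K →* E, Function.Injective f ∧ Subgroup.center E = N.map f := by
  have := Fact.mk hp
  have := hN.normal
  have hcent := hN.le_center hp
  let ι : Multiplicative (ZMod p) ≃* N := mulEquivOfPrimeCardEq (by simp) hN.card_eq
  have hsep (q : K ⧸ N) (hq : q ≠ 1) : ∃ χ : K ⧸ N →* Multiplicative (ZMod p), χ q ≠ 1 :=
    exists_monoidHom_zmod_ne_one hp hN.mul_comm_quotient hN.pow_quotient hq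
  have hker := TwistedProduct.center_eq_ker hcent ι hsep
  have hcenter := TwistedProduct.center_eq_map_inl hcent ι hsep
  have : Finite (K ⧸ N →* Multiplicative (ZMod p)) := Finite.of_injective _ DFunLike.coe_injective
  obtain ⟨g, hg⟩ := SetLike.exists_not_mem_of_ne_top N hNtop
  obtain ⟨χ, hχ⟩ := hsep g (mt (QuotientGroup.eq_one_iff g).1 hg)
  refine ⟨_, inferInstance, Finite.of_equiv _ equivProd.symm, ?_, inl, inl_injective, hcenter⟩
  refine isExtraspecial_of_card_center hp (a := inr χ) (b := inl g) ?_ (fun a b => ?_)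
    (fun x => ?_) ?_
  · rw [hcenter, Subgroup.card_map_of_injective inl_injective, hN.card_eq]
  · rw [hker, MonoidHom.mem_ker, map_commutatorElement, commutatorElement_eq_one_iff_mul_comm]
    exact Prod.ext (hN.mul_comm_quotient _ _) (mul_comm _ _)
  · rw [hker, MonoidHom.mem_ker, map_pow]
    refine Prod.ext (hN.pow_quotient _) (MonoidHom.ext fun q => ?_)
    exact multiplicative_zmod_pow_eq_one _
  · rw [TwistedProduct.commutator_inr_inl, Ne, map_eq_one_iff _ inl_injective]
    simpa using hχ

theorem IsC1Subgroup.exists_isExtraspecial {G : Type u} [Group G] [Finite G] (hp : p.Prime)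
    {N : Subgroup G} (hN : IsC1Subgroup p N) :
    ∃ (E : Type u) (_ : Group E), Finite E ∧ IsExtraspecial p E ∧
      ∃ f : G →* E, Function.Injective f ∧ Subgroup.center E ≤ f.range := by
  have := Fact.mk hp
  have hNtop : N.prod (⊥ : Subgroup (Multiplicative (ZMod p))) ≠ ⊤ := fun h => by
    simpa [Subgroup.mem_prod] using h.ge (Subgroup.mem_top (1, Multiplicative.ofAdd (1 : ZMod p)))
  obtain ⟨E, _, hfin, hE, f, hf, hZ⟩ := hN.prod_bot.exists_isExtraspecial_of_ne_top hp hNtop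
  refine ⟨E, _, hfin, hE, f.comp (MonoidHom.inl _ _), hf.comp (Prod.mk_left_injective 1), ?_⟩
  rw [hZ]
  rintro _ ⟨⟨g, c⟩, hgc, rfl⟩
  obtain rfl : c = 1 := Subgroup.mem_bot.1 (Subgroup.mem_prod.1 hgc).2
  exact ⟨g, rfl⟩

end

/-- Proposition 4.20: the classes `C₁` and `C₂` of `p`-groups coincide. A finite group
`G` has a normal subgroup `N` of order `p` with `G/N` elementary abelian iff `G` is
isomorphic to a subgroup `H` of an extraspecial `p`-group `E` with `Z(E) ≤ H`. -/
theorem classC1_eq_classC2 (p : ℕ) (hp : p.Prime)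
    (G : Type*) [Group G] [Finite G] :
    (∃ N : Subgroup G, N.Normal ∧ Nat.card N = p ∧
        (∀ a b : G, ⁅a, b⁆ ∈ N) ∧ (∀ g : G, g ^ p ∈ N)) ↔
    (∃ E : GrpCat, Finite E ∧ IsExtraspecial p E ∧
        ∃ H : Subgroup E, Subgroup.center E ≤ H ∧ Nonempty (G ≃* H)) := by
  constructor
  · rintro ⟨N, -, hcard, hcomm, hpow⟩
    let e : Shrink.{u_2} G ≃* G := Shrink.mulEquiv
    have hN : IsC1Subgroup p (N.comap e.toMonoidHom) :=
      IsC1Subgroup.comap ⟨hcard, hcomm, hpow⟩ e.toMonoidHom e.injective (by simp)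
    obtain ⟨E, _, hfin, hE, f, hf, hZ⟩ := hN.exists_isExtraspecial hp
    exact ⟨GrpCat.of E, hfin, hE, f.range, hZ, ⟨e.symm.trans (MonoidHom.ofInjective hf)⟩⟩
  · rintro ⟨E, -, hE, H, hZH, ⟨e⟩⟩
    have hN := hE.isC1Subgroup_center.comap (H.subtype.comp e.toMonoidHom)
      (H.subtype_injective.comp e.injective) (by
        rwa [MonoidHom.range_comp, MonoidHom.range_eq_top.2 e.surjective, ← MonoidHom.range_eq_map,
          Subgroup.range_subtype])
    exact ⟨_, hN.normal, hN.card_eq, hN.commutator_mem, hN.pow_mem⟩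
end
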